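/- arXiv:1602.00240 — 7 statements merged into one kernel-verified Lean document; each statement's English description precedes it below -/
import Mathlib

section
/- The digital image X = ([0,2]_Z^2 × [0,1]_Z) \ {(1,1,1)} ⊂ Z^3 is 6-contractible, i.e., its identity map is 6-homotopic to a constant map. -/
/- ## General framework for digital topology -/

variable {α : Type*}

/-- A (2,κ)-continuous path of length `m` in the digital image `X`. -/
def PathOn (X : Set α) (κ : α → α → Prop) (m : ℕ) (f : ℕ → α) : Prop :=
  (∀ i ≤ m, f i ∈ X) ∧ ∀ i < m, f i = f (i + 1) ∨ κ (f i) (f (i + 1))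

/-- A κ-loop of length `m` based at `x0`. -/
def IsLoop (X : Set α) (κ : α → α → Prop) (x0 : α) (m : ℕ) (f : ℕ → α) : Prop :=
  PathOn X κ m f ∧ f 0 = x0 ∧ f m = x0

/-- `f'` (of length `m'`) is a trivial extension of `f` (of length `m`):
it traverses the same path, with pauses. -/
def TrivExt (m : ℕ) (f : ℕ → α) (m' : ℕ) (f' : ℕ → α) : Prop :=
  ∃ φ : ℕ → ℕ, φ 0 = 0 ∧ φ m' = m ∧
    (∀ i < m', φ (i + 1) = φ i ∨ φ (i + 1) = φ i + 1) ∧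
    ∀ i ≤ m', f' i = f (φ i)

/-- A homotopy between loops `F` and `G` of the same length `m`, holding the
endpoints fixed at `x0`. -/
def HtpyFixed (X : Set α) (κ : α → α → Prop) (x0 : α) (m M : ℕ) (F G : ℕ → α) : Prop :=
  ∃ H : ℕ → ℕ → α,
    (∀ s ≤ m, ∀ t ≤ M, H s t ∈ X) ∧
    (∀ s ≤ m, H s 0 = F s ∧ H s M = G s) ∧
    (∀ t ≤ M, ∀ s, s < m → (H s t = H (s + 1) t ∨ κ (H s t) (H (s + 1) t))) ∧
    (∀ s ≤ m, ∀ t, t < M → (H s t = H s (t + 1) ∨ κ (H s t) (H s (t + 1)))) ∧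
    (∀ t ≤ M, H 0 t = x0 ∧ H m t = x0)

/-- Two loops based at `x0` belong to the same loop class: they have trivial
extensions of a common length which are homotopic holding the endpoints fixed. -/
def LoopEquiv (X : Set α) (κ : α → α → Prop) (x0 : α)
    (m : ℕ) (f : ℕ → α) (n : ℕ) (g : ℕ → α) : Prop :=
  ∃ m' f' g', TrivExt m f m' f' ∧ TrivExt n g m' g' ∧ ∃ M, HtpyFixed X κ x0 m' M f' g'

/-- The digital fundamental group `Π_1^κ(X,x0)` is trivial: every κ-loop based
at `x0` is in the class of the constant loop. -/
def Pi1Trivial (X : Set α) (κ : α → α → Prop) (x0 : α) : Prop :=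
  ∀ m f, IsLoop X κ x0 m f → LoopEquiv X κ x0 m f 0 (fun _ => x0)

/-- Adjacent or equal. -/
def AdjEq (κ : α → α → Prop) (a b : α) : Prop := a = b ∨ κ a b

/-- `H` is a κ-homotopy (of length `M`) from the identity map of `X` to a constant map. -/
def Contraction (X : Set α) (κ : α → α → Prop) (M : ℕ) (H : α → ℕ → α) : Prop :=
  (∀ x ∈ X, ∀ t ≤ M, H x t ∈ X) ∧
  (∀ x ∈ X, H x 0 = x) ∧
  (∃ p ∈ X, ∀ x ∈ X, H x M = p) ∧
  (∀ t ≤ M, ∀ x ∈ X, ∀ y ∈ X, κ x y → AdjEq κ (H x t) (H y t)) ∧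
  (∀ x ∈ X, ∀ t, t < M → AdjEq κ (H x t) (H x (t + 1)))

/-- `X` is κ-contractible. -/
def Contractible (X : Set α) (κ : α → α → Prop) : Prop :=
  ∃ M H, Contraction X κ M H

/-- `(X,x0)` is pointed κ-contractible: a contraction to `x0` holding `x0` fixed. -/
def PointedContractible (X : Set α) (κ : α → α → Prop) (x0 : α) : Prop :=
  ∃ M H, Contraction X κ M H ∧ (∀ t ≤ M, H x0 t = x0) ∧ ∀ x ∈ X, H x M = x0

/-- The subset `Y` of `X` is κ-nullhomotopic in `X`: its inclusion map is
homotopic in `X` to a constant map. -/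
def NullhomotopicIn (Y X : Set α) (κ : α → α → Prop) : Prop :=
  ∃ M, ∃ H : α → ℕ → α,
    (∀ y ∈ Y, ∀ t ≤ M, H y t ∈ X) ∧
    (∀ y ∈ Y, H y 0 = y) ∧
    (∃ p ∈ X, ∀ y ∈ Y, H y M = p) ∧
    (∀ t ≤ M, ∀ x ∈ Y, ∀ y ∈ Y, κ x y → AdjEq κ (H x t) (H y t)) ∧
    (∀ y ∈ Y, ∀ t, t < M → AdjEq κ (H y t) (H y (t + 1)))

/-- `P` is a κ-path subset of `X`: the image of a κ-path in `X`. -/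
def IsPathSubset (P X : Set α) (κ : α → α → Prop) : Prop :=
  ∃ m f, PathOn X κ m f ∧ (∀ i ≤ m, f i ∈ P) ∧ ∀ p ∈ P, ∃ i ≤ m, f i = p

/-- `X` has no κ-hole: every κ-path subset of `X` is κ-nullhomotopic in `X`. -/
def NoHole (X : Set α) (κ : α → α → Prop) : Prop :=
  ∀ P : Set α, IsPathSubset P X κ → NullhomotopicIn P X κ

/-- `X` is κ-connected (and nonempty). -/
def ConnectedDig (X : Set α) (κ : α → α → Prop) : Prop :=
  X.Nonempty ∧ ∀ a ∈ X, ∀ b ∈ X, ∃ m f, PathOn X κ m f ∧ f 0 = a ∧ f m = b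

/-- The κ-component of `x` in `X`. -/
def Component (X : Set α) (κ : α → α → Prop) (x : α) : Set α :=
  {y | y ∈ X ∧ ∃ m f, PathOn X κ m f ∧ f 0 = x ∧ f m = y}

/-- A loop-preserving homotopy from the loop `f` to the loop `g`
(each stage is a loop; the basepoint may move). -/
def LoopPresHtpy (X : Set α) (κ : α → α → Prop) (m M : ℕ)
    (f g : ℕ → α) (H : ℕ → ℕ → α) : Prop :=
  (∀ s ≤ m, ∀ t ≤ M, H s t ∈ X) ∧
  (∀ s ≤ m, H s 0 = f s ∧ H s M = g s) ∧
  (∀ t ≤ M, ∀ s, s < m → (H s t = H (s + 1) t ∨ κ (H s t) (H (s + 1) t))) ∧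
  (∀ s ≤ m, ∀ t, t < M → (H s t = H s (t + 1) ∨ κ (H s t) (H s (t + 1)))) ∧
  (∀ t ≤ M, H 0 t = H m t)

/-- `X` has no κ-loophole: every κ-loop in `X` is nullhomotopic in `X` by a
loop-preserving homotopy. -/
def NoLoophole (X : Set α) (κ : α → α → Prop) : Prop :=
  ∀ m f, PathOn X κ m f → f 0 = f m →
    ∃ p ∈ X, ∃ M H, LoopPresHtpy X κ m M f (fun _ => p) H

/- ## Concrete adjacencies and images -/

/-- 6-adjacency (c₁-adjacency) on ℤ³. -/
def adj6 (p q : ℤ × ℤ × ℤ) : Prop :=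
  |p.1 - q.1| + |p.2.1 - q.2.1| + |p.2.2 - q.2.2| = 1

/-- 26-adjacency (c₃-adjacency) on ℤ³. -/
def adj26 (p q : ℤ × ℤ × ℤ) : Prop :=
  p ≠ q ∧ |p.1 - q.1| ≤ 1 ∧ |p.2.1 - q.2.1| ≤ 1 ∧ |p.2.2 - q.2.2| ≤ 1

/-- 18-adjacency (c₂-adjacency) on ℤ³. -/
def adj18 (p q : ℤ × ℤ × ℤ) : Prop :=
  adj26 p q ∧ (p.1 = q.1 ∨ p.2.1 = q.2.1 ∨ p.2.2 = q.2.2)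

/-- 4-adjacency (c₁-adjacency) on ℤ². -/
def adj4 (p q : ℤ × ℤ) : Prop := |p.1 - q.1| + |p.2 - q.2| = 1

/-- 8-adjacency (c₂-adjacency) on ℤ². -/
def adj8 (p q : ℤ × ℤ) : Prop := p ≠ q ∧ |p.1 - q.1| ≤ 1 ∧ |p.2 - q.2| ≤ 1

/-- 2-adjacency (c₁-adjacency) on ℤ. -/
def adj2 (m n : ℤ) : Prop := |m - n| = 1

/-- The 10-point digital 2-sphere `MSS₁₈`. -/
def MSS18 : Set (ℤ × ℤ × ℤ) :=
  {(0,0,0), (1,1,0), (1,2,0), (0,3,0), (-1,2,0),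
   (-1,1,0), (0,1,-1), (0,2,-1), (0,2,1), (0,1,1)}

/-- The 6-point digital 2-sphere `MSS'₁₈ = MSS'₂₆`. -/
def MSS18' : Set (ℤ × ℤ × ℤ) :=
  {(0,0,0), (1,1,0), (0,2,0), (-1,1,0), (0,1,-1), (0,1,1)}

/-- The digital 2-sphere `MSS₆ = [0,2]³ \ {(1,1,1)}`. -/
def MSS6 : Set (ℤ × ℤ × ℤ) :=
  {p | (0 ≤ p.1 ∧ p.1 ≤ 2) ∧ (0 ≤ p.2.1 ∧ p.2.1 ≤ 2) ∧ (0 ≤ p.2.2 ∧ p.2.2 ≤ 2) ∧ p ≠ (1,1,1)}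

/-- The image `X = ([0,2]² × [0,1]) \ {(1,1,1)}` of Example 2.11. -/
def Xbox : Set (ℤ × ℤ × ℤ) :=
  {p | (0 ≤ p.1 ∧ p.1 ≤ 2) ∧ (0 ≤ p.2.1 ∧ p.2.1 ≤ 2) ∧ (0 ≤ p.2.2 ∧ p.2.2 ≤ 1) ∧ p ≠ (1,1,1)}

/-- Explicit contraction of `Xbox`. -/
def Hc : ℤ × ℤ × ℤ → ℕ → ℤ × ℤ × ℤ := fun p t =>
  if t = 0 then p
  else if t = 1 then (p.1, p.2.1, 0)
  else if t = 2 then (max (p.1 - 1) 0, p.2.1, 0)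
  else if t = 3 then (0, p.2.1, 0)
  else if t = 4 then (0, max (p.2.1 - 1) 0, 0)
  else (0, 0, 0)

/-- `X = ([0,2]² × [0,1]) \ {(1,1,1)}` is 6-contractible. -/
theorem stmt0 : Contractible Xbox adj6 := by
  refine ⟨5, Hc, ?_, ?_, ⟨(0,0,0), by simp [Xbox], fun x _ => by simp [Hc]⟩, ?_, ?_⟩
  · rintro ⟨a, b, c⟩ hx t ht
    obtain ⟨⟨h1, h2⟩, ⟨h3, h4⟩, ⟨h5, h6⟩, h7⟩ := hx
    interval_cases t <;>
      (try simp only [Hc, Xbox, reduceIte, Nat.reduceEqDiff, Set.mem_setOf_eq, Prod.mk.injEq,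
        ne_eq, not_and] at *) <;>
      omega
  · rintro ⟨a, b, c⟩ _; simp [Hc]
  · rintro t ht ⟨a, b, c⟩ hx ⟨a', b', c'⟩ hy hadj
    obtain ⟨⟨h1, h2⟩, ⟨h3, h4⟩, ⟨h5, h6⟩, -⟩ := hx
    obtain ⟨⟨g1, g2⟩, ⟨g3, g4⟩, ⟨g5, g6⟩, -⟩ := hy
    simp only [adj6, Int.abs_eq_natAbs] at hadj
    interval_cases t <;>
      (try simp only [Hc, AdjEq, adj6, Prod.mk.injEq, Int.abs_eq_natAbs, Nat.reduceEqDiff,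
        Nat.reduceAdd, reduceIte, true_and, and_true] at *) <;>
      first
      | omega
      | exact Or.inl trivial
  · rintro ⟨a, b, c⟩ hx t ht
    obtain ⟨⟨h1, h2⟩, ⟨h3, h4⟩, ⟨h5, h6⟩, -⟩ := hx
    interval_cases t <;>
      (try simp only [Hc, AdjEq, adj6, Prod.mk.injEq, Int.abs_eq_natAbs, Nat.reduceEqDiff,
        Nat.reduceAdd, reduceIte, true_and, and_true] at *) <;>
      first
      | omega
      | exact Or.inl trivial
end

section
/- Let X = ([0,2]_Z^2 × [0,1]_Z) \ {(1,1,1)} ⊂ Z^3 and x_0 = (0,0,1) ∈ X. Then (X, x_0) is not pointed 6-contractible: there is no 6-homotopy from the identity of X to a constant map which holds x_0 fixed throughout. -/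
/- ## General framework for digital topology -/

variable {α : Type*}

namespace Stmt1Aux

instance (p q : ℤ × ℤ × ℤ) : Decidable (adj6 p q) := by unfold adj6; infer_instance
instance (p q : ℤ × ℤ × ℤ) : Decidable (AdjEq adj6 p q) := by unfold AdjEq; infer_instance
instance (p : ℤ × ℤ × ℤ) : Decidable (p ∈ Xbox) := by
  show Decidable ((0 ≤ p.1 ∧ p.1 ≤ 2) ∧ (0 ≤ p.2.1 ∧ p.2.1 ≤ 2) ∧ (0 ≤ p.2.2 ∧ p.2.2 ≤ 1) ∧ p ≠ (1,1,1))
  infer_instance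

def lab (p : ℤ × ℤ × ℤ) : ZMod 8 :=
  if p.1 = 0 ∧ p.2.1 = 0 then 0
  else if p.1 = 1 ∧ p.2.1 = 0 then 1
  else if p.1 = 2 ∧ p.2.1 = 0 then 2
  else if p.1 = 2 ∧ p.2.1 = 1 then 3
  else if p.1 = 2 ∧ p.2.1 = 2 then 4
  else if p.1 = 1 ∧ p.2.1 = 2 then 5
  else if p.1 = 0 ∧ p.2.1 = 2 then 6
  else 7

def dlab (p q : ℤ × ℤ × ℤ) : ℤ :=
  if (lab q - lab p).val ≤ 4 then ((lab q - lab p).val : ℤ) else ((lab q - lab p).val : ℤ) - 8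

def Good (p : ℤ × ℤ × ℤ) : Prop := p ∈ Xbox ∧ ¬(p.1 = 1 ∧ p.2.1 = 1)

instance (p : ℤ × ℤ × ℤ) : Decidable (Good p) := by unfold Good; infer_instance

def W (g : ℕ → ℤ × ℤ × ℤ) : ℤ := ∑ s ∈ Finset.range 8, dlab (g s) (g (s + 1))

def c : ℕ → ℤ × ℤ × ℤ := fun s =>
  match s % 8 with
  | 0 => (0,0,1) | 1 => (1,0,1) | 2 => (2,0,1) | 3 => (2,1,1)
  | 4 => (2,2,1) | 5 => (1,2,1) | 6 => (0,2,1) | _ => (0,1,1)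

lemma lab_congr {p q : ℤ × ℤ × ℤ} (h1 : p.1 = q.1) (h2 : p.2.1 = q.2.1) : lab p = lab q := by
  simp only [lab, h1, h2]

@[simp] lemma dlab_self (p : ℤ × ℤ × ℤ) : dlab p p = 0 := by simp [dlab]

lemma dlab_eq_zero {p q : ℤ × ℤ × ℤ} (h : lab p = lab q) : dlab p q = 0 := by
  simp [dlab, h]

lemma dlab_cast (p q : ℤ × ℤ × ℤ) : ((dlab p q : ℤ) : ZMod 8) = lab q - lab p := by
  unfold dlab
  split <;> push_cast <;> simp [ZMod.natCast_val] <;> decide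

lemma int_eq_of_zmod {a b : ℤ} (h1 : a - b ≤ 7) (h2 : b - a ≤ 7)
    (h : ((a : ℤ) : ZMod 8) = ((b : ℤ) : ZMod 8)) : a = b := by
  have : (8:ℤ) ∣ a - b := by
    have := (ZMod.intCast_zmod_eq_zero_iff_dvd (a - b) 8).mp (by push_cast; rw [h, sub_self])
    exact this
  omega

lemma dlab_bound {p q : ℤ × ℤ × ℤ} (hp : Good p) (hq : Good q) (h : AdjEq adj6 p q) :
    |dlab p q| ≤ 1 := by
  obtain ⟨x, y, z⟩ := p
  obtain ⟨x', y', z'⟩ := q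
  obtain ⟨⟨⟨hx0, hx2⟩, ⟨hy0, hy2⟩, ⟨hz0, hz1⟩, -⟩, hp'⟩ := hp
  obtain ⟨⟨⟨hx0', hx2'⟩, ⟨hy0', hy2'⟩, ⟨hz0', hz1'⟩, -⟩, hq'⟩ := hq
  simp only at *
  revert h hp' hq'
  interval_cases x <;> interval_cases y <;> interval_cases z <;>
    interval_cases x' <;> interval_cases y' <;> interval_cases z' <;> decide

lemma z_eq {p q : ℤ × ℤ × ℤ} (h : AdjEq adj6 p q) (hd : dlab p q ≠ 0) : p.2.2 = q.2.2 := by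
  rcases h with rfl | h
  · exact absurd (dlab_self p) hd
  · by_contra hz
    have hxy : p.1 = q.1 ∧ p.2.1 = q.2.1 := by
      unfold adj6 at h
      rw [Int.abs_eq_natAbs, Int.abs_eq_natAbs, Int.abs_eq_natAbs] at h
      constructor <;> omega
    exact hd (dlab_eq_zero (lab_congr hxy.1 hxy.2))


lemma W_congr (g h : ℕ → ℤ × ℤ × ℤ) (he : ∀ s ≤ 8, g s = h s) : W g = W h := by
  unfold W
  refine Finset.sum_congr rfl fun s hs => ?_
  have hs8 := Finset.mem_range.mp hs
  rw [he s (by omega), he (s+1) (by omega)]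

lemma W_const (p : ℤ × ℤ × ℤ) : W (fun _ => p) = 0 := by simp [W]

lemma hc0 : c 0 = ((0,0,1) : ℤ × ℤ × ℤ) := rfl
lemma hc8 : c 8 = c 0 := rfl
lemma hcG : ∀ s ≤ 8, Good (c s) := by decide
lemma hcadj : ∀ s < 8, adj6 (c s) (c (s+1)) := by decide
lemma Wc : W c = 8 := by decide

lemma keylemma (g g' : ℕ → ℤ × ℤ × ℤ)
    (hg8 : g 8 = g 0) (hg'8 : g' 8 = g' 0)
    (hG : ∀ s ≤ 8, Good (g s)) (hG' : ∀ s ≤ 8, Good (g' s))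
    (hsp : ∀ s < 8, AdjEq adj6 (g s) (g (s+1)))
    (hsp' : ∀ s < 8, AdjEq adj6 (g' s) (g' (s+1)))
    (ht : ∀ s ≤ 8, AdjEq adj6 (g s) (g' s)) :
    W g = W g' := by
  have per : ∀ s < 8, dlab (g s) (g (s+1)) - dlab (g' s) (g' (s+1))
      = dlab (g s) (g' s) - dlab (g (s+1)) (g' (s+1)) := by
    intro s h
    have b1 := dlab_bound (hG s h.le) (hG (s+1) h) (hsp s h)
    have b2 := dlab_bound (hG' s h.le) (hG' (s+1) h) (hsp' s h)
    have b3 := dlab_bound (hG s h.le) (hG' s h.le) (ht s h.le)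
    have b4 := dlab_bound (hG (s+1) h) (hG' (s+1) h) (ht (s+1) h)
    rw [abs_le] at b1 b2 b3 b4
    apply int_eq_of_zmod (by omega) (by omega)
    push_cast [dlab_cast]
    ring
  have htel : W g - W g' = ∑ s ∈ Finset.range 8,
      (dlab (g s) (g' s) - dlab (g (s+1)) (g' (s+1))) := by
    rw [W, W, ← Finset.sum_sub_distrib]
    exact Finset.sum_congr rfl fun s hs => per s (Finset.mem_range.mp hs)
  rw [Finset.sum_range_sub' (fun s => dlab (g s) (g' s)) 8, hg8, hg'8, sub_self] at htel
  omega

lemma W_expand (g : ℕ → ℤ × ℤ × ℤ) : W g = dlab (g 0) (g 1) + dlab (g 1) (g 2)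
    + dlab (g 2) (g 3) + dlab (g 3) (g 4) + dlab (g 4) (g 5) + dlab (g 5) (g 6)
    + dlab (g 6) (g 7) + dlab (g 7) (g 8) := by
  norm_num [W, Finset.sum_range_succ]


end Stmt1Aux


open Stmt1Aux in
private lemma stmt1_aux_eq_110 {p : ℤ × ℤ × ℤ} (hp : p ∈ Xbox) (h1 : p.1 = 1)
    (h2 : p.2.1 = 1) : p = (1,1,0) := by
  obtain ⟨x, y, z⟩ := p
  obtain ⟨-, -, hz, hne⟩ := hp
  have h1' : x = 1 := h1
  have h2' : y = 1 := h2
  have hz0 : (0:ℤ) ≤ z := hz.1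
  have hz1 : z ≤ 1 := hz.2
  subst h1'; subst h2'
  have hzne : z ≠ 1 := fun h => hne (by rw [h])
  have hzz : z = 0 := by omega
  rw [hzz]


open Stmt1Aux in
/-- `(X, (0,0,1))` is not pointed 6-contractible. -/
theorem stmt1 : ¬ PointedContractible Xbox adj6 ((0,0,1) : ℤ × ℤ × ℤ) := by
  rintro ⟨M, H, ⟨hXmem, h0, -, hspat, htemp⟩, hpt, hMend⟩
  have hcX : ∀ s ≤ 8, c s ∈ Xbox := fun s hs => (hcG s hs).1
  have key : ∀ t, t ≤ M → (∀ s ≤ 8, Good (H (c s) t)) ∧ W (fun s => H (c s) t) = 8 := by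
    intro t
    induction t with
    | zero =>
      intro _
      have he : ∀ s ≤ 8, H (c s) 0 = c s := fun s hs => h0 (c s) (hcX s hs)
      refine ⟨fun s hs => ?_, ?_⟩
      · rw [he s hs]; exact hcG s hs
      · rw [W_congr _ c he]; exact Wc
    | succ t ih =>
      intro ht1
      have htlt : t < M := ht1
      have ht : t ≤ M := Nat.le_of_lt htlt
      obtain ⟨ihG, ihW⟩ := ih ht
      have htempadj : ∀ s ≤ 8, AdjEq adj6 (H (c s) t) (H (c s) (t+1)) :=
        fun s hs => htemp (c s) (hcX s hs) t htlt
      have hsp : ∀ u, u ≤ M → ∀ s, s < 8 → AdjEq adj6 (H (c s) u) (H (c (s+1)) u) :=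
        fun u hu s hs =>
          hspat u hu (c s) (hcX s hs.le) (c (s+1)) (hcX (s+1) hs) (hcadj s hs)
      have hb : ∀ s, s < 8 → |dlab (H (c s) t) (H (c (s+1)) t)| ≤ 1 :=
        fun s hs => dlab_bound (ihG s hs.le) (ihG (s+1) hs) (hsp t ht s hs)
      have hones : ∀ s, s < 8 → dlab (H (c s) t) (H (c (s+1)) t) = 1 := by
        have hsum := ihW
        rw [W_expand] at hsum
        have b0 : |dlab (H (c 0) t) (H (c 1) t)| ≤ 1 := hb 0 (by norm_num)
        have b1 : |dlab (H (c 1) t) (H (c 2) t)| ≤ 1 := hb 1 (by norm_num)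
        have b2 : |dlab (H (c 2) t) (H (c 3) t)| ≤ 1 := hb 2 (by norm_num)
        have b3 : |dlab (H (c 3) t) (H (c 4) t)| ≤ 1 := hb 3 (by norm_num)
        have b4 : |dlab (H (c 4) t) (H (c 5) t)| ≤ 1 := hb 4 (by norm_num)
        have b5 : |dlab (H (c 5) t) (H (c 6) t)| ≤ 1 := hb 5 (by norm_num)
        have b6 : |dlab (H (c 6) t) (H (c 7) t)| ≤ 1 := hb 6 (by norm_num)
        have b7 : |dlab (H (c 7) t) (H (c 8) t)| ≤ 1 := hb 7 (by norm_num)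
        rw [abs_le] at b0 b1 b2 b3 b4 b5 b6 b7
        have e0 : dlab (H (c 0) t) (H (c 1) t) = 1 := by omega
        have e1 : dlab (H (c 1) t) (H (c 2) t) = 1 := by omega
        have e2 : dlab (H (c 2) t) (H (c 3) t) = 1 := by omega
        have e3 : dlab (H (c 3) t) (H (c 4) t) = 1 := by omega
        have e4 : dlab (H (c 4) t) (H (c 5) t) = 1 := by omega
        have e5 : dlab (H (c 5) t) (H (c 6) t) = 1 := by omega
        have e6 : dlab (H (c 6) t) (H (c 7) t) = 1 := by omega
        have e7 : dlab (H (c 7) t) (H (c 8) t) = 1 := by omega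
        intro s hs
        interval_cases s
        exacts [e0, e1, e2, e3, e4, e5, e6, e7]
      have hz : ∀ s, s ≤ 8 → (H (c s) t).2.2 = 1 := by
        have z0 : (H (c 0) t).2.2 = 1 := by rw [hc0, hpt t ht]
        have step : ∀ s, s < 8 → (H (c (s+1)) t).2.2 = (H (c s) t).2.2 :=
          fun s hs => (z_eq (hsp t ht s hs) (by rw [hones s hs]; norm_num)).symm
        have z1 : (H (c 1) t).2.2 = 1 := (step 0 (by norm_num)).trans z0
        have z2 : (H (c 2) t).2.2 = 1 := (step 1 (by norm_num)).trans z1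
        have z3 : (H (c 3) t).2.2 = 1 := (step 2 (by norm_num)).trans z2
        have z4 : (H (c 4) t).2.2 = 1 := (step 3 (by norm_num)).trans z3
        have z5 : (H (c 5) t).2.2 = 1 := (step 4 (by norm_num)).trans z4
        have z6 : (H (c 6) t).2.2 = 1 := (step 5 (by norm_num)).trans z5
        have z7 : (H (c 7) t).2.2 = 1 := (step 6 (by norm_num)).trans z6
        have z8 : (H (c 8) t).2.2 = 1 := (step 7 (by norm_num)).trans z7
        intro s hs
        interval_cases s
        exacts [z0, z1, z2, z3, z4, z5, z6, z7, z8]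
      have hmem1 : ∀ s, s ≤ 8 → H (c s) (t+1) ∈ Xbox :=
        fun s hs => hXmem (c s) (hcX s hs) (t+1) ht1
      have hG1 : ∀ s ≤ 8, Good (H (c s) (t+1)) := by
        intro s hs
        refine ⟨hmem1 s hs, ?_⟩
        rintro ⟨hx1, hy1⟩
        have h110 : H (c s) (t+1) = (1,1,0) := stmt1_aux_eq_110 (hmem1 s hs) hx1 hy1
        have hzt := hz s hs
        have hGt := ihG s hs
        rcases htempadj s hs with he | hadj
        · rw [he, h110] at hzt
          exact absurd hzt (by norm_num)
        · rw [h110] at hadj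
          have hadj' : |(H (c s) t).1 - 1| + |(H (c s) t).2.1 - 1|
              + |(H (c s) t).2.2 - 0| = 1 := hadj
          rw [Int.abs_eq_natAbs, Int.abs_eq_natAbs, Int.abs_eq_natAbs] at hadj'
          have hng := hGt.2
          omega
      refine ⟨hG1, ?_⟩
      rw [← ihW]
      exact (keylemma (fun s => H (c s) t) (fun s => H (c s) (t+1))
        (by show H (c 8) t = H (c 0) t; rw [hc8])
        (by show H (c 8) (t+1) = H (c 0) (t+1); rw [hc8])
        ihG hG1 (hsp t ht) (hsp (t+1) ht1) htempadj).symm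
  obtain ⟨-, hW⟩ := key M le_rfl
  have hcst : ∀ s ≤ 8, H (c s) M = ((0,0,1) : ℤ × ℤ × ℤ) :=
    fun s hs => hMend (c s) (hcX s hs)
  rw [W_congr _ (fun _ => ((0,0,1) : ℤ × ℤ × ℤ)) hcst, W_const] at hW
  exact absurd hW (by norm_num)
end

section
/- Every 18-loop f: [0,m]_Z → MSS_18 based at c_0 = (0,0,0) is loop-class equivalent (homotopic holding endpoints fixed, up to trivial extension) to an 18-loop f' based at c_0 whose image avoids the point c_3 = (0,3,0). -/
/- ## General framework for digital topology -/

variable {α : Type*}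

/- ## Auxiliary material for the proof of `stmt3` -/

/-- The four 18-neighbors of `c₃ = (0,3,0)` in `MSS₁₈`. -/
def Nbhd (x : ℤ × ℤ × ℤ) : Prop :=
  x = (1,2,0) ∨ x = (-1,2,0) ∨ x = (0,2,1) ∨ x = (0,2,-1)

/-- A common neighbor (within `Nbhd`) of two points of `Nbhd`. -/
def midN (a b : ℤ × ℤ × ℤ) : ℤ × ℤ × ℤ :=
  if (a = (1,2,0) ∧ b = (-1,2,0)) ∨ (a = (-1,2,0) ∧ b = (1,2,0)) then (0,2,1)
  else if (a = (0,2,1) ∧ b = (0,2,-1)) ∨ (a = (0,2,-1) ∧ b = (0,2,1)) then (1,2,0)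
  else a

lemma nbhd_basic {x : ℤ × ℤ × ℤ} (hx : Nbhd x) :
    x ∈ MSS18 ∧ x ≠ (0,3,0) ∧ adj18 ((0,3,0) : ℤ × ℤ × ℤ) x ∧ adj18 x ((0,3,0) : ℤ × ℤ × ℤ) := by
  rcases hx with rfl | rfl | rfl | rfl <;>
    refine ⟨by simp [MSS18], by norm_num, ?_, ?_⟩ <;> (unfold adj18 adj26; norm_num)

lemma nbr_of_adj {x : ℤ × ℤ × ℤ} (hx : x ∈ MSS18)
    (h : adj18 x ((0,3,0) : ℤ × ℤ × ℤ) ∨ adj18 ((0,3,0) : ℤ × ℤ × ℤ) x) : Nbhd x := by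
  simp only [MSS18, Set.mem_insert_iff, Set.mem_singleton_iff] at hx
  rcases hx with rfl | rfl | rfl | rfl | rfl | rfl | rfl | rfl | rfl | rfl <;>
    first
      | exact Or.inl rfl
      | exact Or.inr (Or.inl rfl)
      | exact Or.inr (Or.inr (Or.inl rfl))
      | exact Or.inr (Or.inr (Or.inr rfl))
      | (exfalso; rcases h with h | h <;> (unfold adj18 adj26 at h; norm_num at h))

lemma midN_spec {a b : ℤ × ℤ × ℤ} (ha : Nbhd a) (hb : Nbhd b) :
    Nbhd (midN a b) ∧ AdjEq adj18 a (midN a b) ∧ AdjEq adj18 (midN a b) b := by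
  rcases ha with rfl | rfl | rfl | rfl <;> rcases hb with rfl | rfl | rfl | rfl <;>
    refine ⟨by unfold midN Nbhd; norm_num, ?_, ?_⟩ <;>
      (unfold AdjEq midN; norm_num; try (unfold adj18 adj26; norm_num))

/-- The doubled path. -/
def Fd (f : ℕ → ℤ × ℤ × ℤ) (s : ℕ) : ℤ × ℤ × ℤ := f (s / 2)

/-- Index of the last non-`c₃` value at or before `s`. -/
def Pidx (f : ℕ → ℤ × ℤ × ℤ) (s : ℕ) : ℕ :=
  Nat.findGreatest (fun r => Fd f r ≠ (0,3,0)) s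

/-- The repaired loop, avoiding `c₃`. -/
def gfun (f : ℕ → ℤ × ℤ × ℤ) (s : ℕ) : ℤ × ℤ × ℤ :=
  if Fd f s = (0,3,0) then
    (if Fd f (s+1) = (0,3,0) then Fd f (Pidx f s)
     else midN (Fd f (Pidx f s)) (Fd f (s+1)))
  else Fd f s


/-- every 18-loop in `MSS₁₈` based at `c₀` is loop-class
equivalent to an 18-loop based at `c₀` avoiding `c₃ = (0,3,0)`. -/
theorem stmt3 : ∀ (m : ℕ) (f : ℕ → ℤ × ℤ × ℤ),
    IsLoop MSS18 adj18 ((0,0,0) : ℤ × ℤ × ℤ) m f →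
    ∃ m' f', IsLoop MSS18 adj18 ((0,0,0) : ℤ × ℤ × ℤ) m' f' ∧
      (∀ i ≤ m', f' i ≠ ((0,3,0) : ℤ × ℤ × ℤ)) ∧
      LoopEquiv MSS18 adj18 ((0,0,0) : ℤ × ℤ × ℤ) m f m' f' := by
  intro m f hf
  obtain ⟨⟨hmem, hstep⟩, h0, hm⟩ := hf
  have hc03 : ((0,0,0) : ℤ × ℤ × ℤ) ≠ (0,3,0) := by simp [Prod.ext_iff]
  -- basic facts about the doubled path
  have hF0 : Fd f 0 = (0,0,0) := h0
  have hF2m : Fd f (2*m) = (0,0,0) := by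
    unfold Fd; rw [show 2*m/2 = m by omega]; exact hm
  have hFmem : ∀ s ≤ 2*m, Fd f s ∈ MSS18 := by
    intro s hs; exact hmem _ (by unfold Fd at *; omega)
  have hFstep : ∀ s < 2*m, Fd f s = Fd f (s+1) ∨ adj18 (Fd f s) (Fd f (s+1)) := by
    intro s hs
    rcases Nat.even_or_odd s with ⟨k, hk⟩ | ⟨k, hk⟩
    · left; unfold Fd; congr 1; omega
    · have h1 : s/2 = k := by omega
      have h2 : (s+1)/2 = k+1 := by omega
      have := hstep k (by omega)
      unfold Fd; rw [h1, h2]; exact this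
  have hFsucc : ∀ s, Fd f s = Fd f (s+1) ∨ Fd f (s+1) = Fd f (s+2) := by
    intro s
    rcases Nat.even_or_odd s with ⟨k, hk⟩ | ⟨k, hk⟩
    · left; unfold Fd; congr 1; omega
    · right; unfold Fd; congr 1; omega
  -- basic facts about Pidx
  have hPne : ∀ s, Fd f (Pidx f s) ≠ (0,3,0) := by
    intro s
    exact Nat.findGreatest_spec (P := fun r => Fd f r ≠ (0,3,0)) (Nat.zero_le s)
      (by show Fd f 0 ≠ (0,3,0); rw [show Fd f 0 = f 0 from rfl, h0]; exact hc03)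
  have hPle : ∀ s, Pidx f s ≤ s := fun s => Nat.findGreatest_le s
  have hPself : ∀ s, Fd f s ≠ (0,3,0) → Pidx f s = s := by
    intro s hs
    exact le_antisymm (hPle s) (Nat.le_findGreatest le_rfl hs)
  have hPlt : ∀ s, Fd f s = (0,3,0) → Pidx f s < s := by
    intro s hs
    rcases lt_or_eq_of_le (hPle s) with h | h
    · exact h
    · exact absurd (by rw [h]; exact hs) (hPne s)
  have hPsucc : ∀ s, Fd f (s+1) = (0,3,0) → Pidx f (s+1) = Pidx f s := by
    intro s hs
    unfold Pidx
    rw [Nat.findGreatest_succ, if_neg (by simp [hs])]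
  have hPnext : ∀ s, Fd f s = (0,3,0) → Fd f (Pidx f s + 1) = (0,3,0) := by
    intro s hs
    have hlt := hPlt s hs
    by_contra hne
    exact Nat.findGreatest_is_greatest (P := fun r => Fd f r ≠ (0,3,0)) (n := s)
      (Nat.lt_succ_self _) (by unfold Pidx at hlt; omega) hne
  -- values adjacent to c3 along the path lie in Nbhd
  have hAinN : ∀ s < 2*m, Fd f s = (0,3,0) → Nbhd (Fd f (Pidx f s)) := by
    intro s hs hc
    have hlt := hPlt s hc
    rcases hFstep (Pidx f s) (by omega) with h | h
    · exact absurd (h.trans (hPnext s hc)) (hPne s)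
    · rw [hPnext s hc] at h
      exact nbr_of_adj (hFmem _ (by omega)) (Or.inl h)
  have hBinN : ∀ s < 2*m, Fd f s = (0,3,0) → Fd f (s+1) ≠ (0,3,0) → Nbhd (Fd f (s+1)) := by
    intro s hs hc hne
    rcases hFstep s hs with h | h
    · exact absurd (h ▸ hc) hne
    · rw [hc] at h
      exact nbr_of_adj (hFmem _ (by omega)) (Or.inr h)
  have hsle : ∀ s ≤ 2*m, Fd f s = (0,3,0) → s < 2*m := by
    intro s hs hc
    rcases lt_or_eq_of_le hs with h | h
    · exact h
    · rw [h, hF2m] at hc; exact absurd hc hc03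
  -- unfolding gfun
  have hgeq : ∀ s, Fd f s ≠ (0,3,0) → gfun f s = Fd f s := by
    intro s hs; unfold gfun; rw [if_neg hs]
  have hgc1 : ∀ s, Fd f s = (0,3,0) → Fd f (s+1) = (0,3,0) →
      gfun f s = Fd f (Pidx f s) := by
    intro s h1 h2; unfold gfun; rw [if_pos h1, if_pos h2]
  have hgc2 : ∀ s, Fd f s = (0,3,0) → Fd f (s+1) ≠ (0,3,0) →
      gfun f s = midN (Fd f (Pidx f s)) (Fd f (s+1)) := by
    intro s h1 h2; unfold gfun; rw [if_pos h1, if_neg h2]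
  -- gfun lands in Nbhd at former-c3 spots
  have hgN : ∀ s < 2*m, Fd f s = (0,3,0) → Nbhd (gfun f s) := by
    intro s hs hc
    by_cases h2 : Fd f (s+1) = (0,3,0)
    · rw [hgc1 s hc h2]; exact hAinN s hs hc
    · rw [hgc2 s hc h2]
      exact (midN_spec (hAinN s hs hc) (hBinN s hs hc h2)).1
  -- gfun is a path
  have hgmem : ∀ s ≤ 2*m, gfun f s ∈ MSS18 := by
    intro s hs
    by_cases hc : Fd f s = (0,3,0)
    · exact (nbhd_basic (hgN s (hsle s hs hc) hc)).1
    · rw [hgeq s hc]; exact hFmem s hs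
  have hgne : ∀ s ≤ 2*m, gfun f s ≠ (0,3,0) := by
    intro s hs
    by_cases hc : Fd f s = (0,3,0)
    · exact (nbhd_basic (hgN s (hsle s hs hc) hc)).2.1
    · rw [hgeq s hc]; exact hc
  have hgvert : ∀ s ≤ 2*m, Fd f s = gfun f s ∨ adj18 (Fd f s) (gfun f s) := by
    intro s hs
    by_cases hc : Fd f s = (0,3,0)
    · right; rw [hc]; exact (nbhd_basic (hgN s (hsle s hs hc) hc)).2.2.1
    · left; exact (hgeq s hc).symm
  have hgstep : ∀ s < 2*m, gfun f s = gfun f (s+1) ∨ adj18 (gfun f s) (gfun f (s+1)) := by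
    intro s hs
    by_cases h1 : Fd f s = (0,3,0)
    · by_cases h2 : Fd f (s+1) = (0,3,0)
      · rw [hgc1 s h1 h2]
        by_cases h3 : Fd f (s+2) = (0,3,0)
        · rw [hgc1 (s+1) h2 h3, hPsucc s h2]
          exact Or.inl rfl
        · rw [hgc2 (s+1) h2 h3, hPsucc s h2]
          have hs1 : s + 1 < 2*m := hsle (s+1) (by omega) h2
          exact (midN_spec (hAinN s hs h1) (hBinN (s+1) hs1 h2 h3)).2.1
      · rw [hgc2 s h1 h2, hgeq (s+1) h2]
        exact (midN_spec (hAinN s hs h1) (hBinN s hs h1 h2)).2.2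
    · rw [hgeq s h1]
      by_cases h2 : Fd f (s+1) = (0,3,0)
      · have h3 : Fd f (s+2) = (0,3,0) := by
          rcases hFsucc s with h | h
          · exact absurd (h.trans h2) h1
          · exact h ▸ h2
        rw [hgc1 (s+1) h2 h3, hPsucc s h2, hPself s h1]
        exact Or.inl rfl
      · rw [hgeq (s+1) h2]; exact hFstep s hs
  have hg0 : gfun f 0 = (0,0,0) := by
    rw [hgeq 0 (by rw [hF0]; exact hc03), hF0]
  have hg2m : gfun f (2*m) = (0,0,0) := by
    rw [hgeq (2*m) (by rw [hF2m]; exact hc03), hF2m]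
  -- assemble
  refine ⟨2*m, gfun f, ⟨⟨hgmem, hgstep⟩, hg0, hg2m⟩, hgne, 2*m, Fd f, gfun f, ?_, ?_, 1, ?_⟩
  · -- TrivExt m f (2*m) (Fd f)
    refine ⟨fun s => s/2, by show 0/2 = 0; omega, by show 2*m/2 = m; omega,
      fun i _ => by show (i+1)/2 = i/2 ∨ (i+1)/2 = i/2 + 1; omega, fun i _ => rfl⟩
  · -- TrivExt (2*m) (gfun f) (2*m) (gfun f)
    exact ⟨id, rfl, rfl, fun i _ => Or.inr rfl, fun i _ => rfl⟩
  · -- homotopy of length 1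
    refine ⟨fun s t => if t = 0 then Fd f s else gfun f s, ?_, ?_, ?_, ?_, ?_⟩
    · intro s hs t _
      show (if t = 0 then Fd f s else gfun f s) ∈ MSS18
      by_cases ht : t = 0
      · rw [if_pos ht]; exact hFmem s hs
      · rw [if_neg ht]; exact hgmem s hs
    · intro s _
      exact ⟨if_pos rfl, if_neg one_ne_zero⟩
    · intro t ht s hsm
      rcases Nat.le_one_iff_eq_zero_or_eq_one.mp ht with rfl | rfl
      · simpa using hFstep s hsm
      · simpa using hgstep s hsm
    · intro s hs t ht
      have ht0 : t = 0 := Nat.lt_one_iff.mp ht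
      subst ht0
      simpa using hgvert s hs
    · intro t _
      show (if t = 0 then Fd f 0 else gfun f 0) = (0,0,0) ∧
        (if t = 0 then Fd f (2*m) else gfun f (2*m)) = (0,0,0)
      by_cases ht : t = 0
      · rw [if_pos ht, if_pos ht]; exact ⟨hF0, hF2m⟩
      · rw [if_neg ht, if_neg ht]; exact ⟨hg0, hg2m⟩
end

section
/- For any point x in MSS_18, the 18-fundamental group Π_1^18(MSS_18, x) is trivial. -/
/- ## General framework for digital topology -/

variable {α : Type*}

/- ## Auxiliary machinery -/

instance (p q : ℤ × ℤ × ℤ) : Decidable (adj18 p q) := by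
  unfold adj18 adj26; infer_instance

instance (p q : ℤ × ℤ × ℤ) : Decidable (AdjEq adj18 p q) := by
  unfold AdjEq; infer_instance

/-- The points of `MSS18` as a list. -/
def mssL : List (ℤ × ℤ × ℤ) :=
  [(0,0,0), (1,1,0), (1,2,0), (0,3,0), (-1,2,0),
   (-1,1,0), (0,1,-1), (0,2,-1), (0,2,1), (0,1,1)]

/-- Table of pointed contractions: `tbl[b][t][v]` is the index of the image of
vertex `v` at time `t` under the contraction to basepoint `b`. -/
def tbl : List (List (List ℕ)) :=
  [
    [[0, 1, 2, 3, 4, 5, 6, 7, 8, 9], [0, 0, 1, 2, 7, 6, 1, 2, 2, 1], [0, 0, 0, 1, 6, 0, 0, 1, 1, 0], [0, 0, 0, 0, 0, 0, 0, 0, 0, 0]],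
    [[0, 1, 2, 3, 4, 5, 6, 7, 8, 9], [1, 1, 1, 2, 7, 6, 1, 2, 2, 1], [1, 1, 1, 1, 2, 1, 1, 1, 1, 1], [1, 1, 1, 1, 1, 1, 1, 1, 1, 1]],
    [[0, 1, 2, 3, 4, 5, 6, 7, 8, 9], [1, 2, 2, 2, 7, 6, 1, 2, 2, 1], [2, 2, 2, 2, 2, 1, 2, 2, 2, 2], [2, 2, 2, 2, 2, 2, 2, 2, 2, 2]],
    [[0, 1, 2, 3, 4, 5, 6, 7, 8, 9], [1, 2, 3, 3, 7, 6, 1, 2, 2, 1], [2, 3, 3, 3, 3, 7, 2, 3, 3, 2], [3, 3, 3, 3, 3, 3, 3, 3, 3, 3]],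
    [[0, 1, 2, 3, 4, 5, 6, 7, 8, 9], [5, 6, 7, 4, 4, 4, 5, 4, 4, 5], [4, 5, 4, 4, 4, 4, 4, 4, 4, 4], [4, 4, 4, 4, 4, 4, 4, 4, 4, 4]],
    [[0, 1, 2, 3, 4, 5, 6, 7, 8, 9], [5, 6, 7, 4, 5, 5, 5, 4, 4, 5], [5, 5, 4, 5, 5, 5, 5, 5, 5, 5], [5, 5, 5, 5, 5, 5, 5, 5, 5, 5]],
    [[0, 1, 2, 3, 4, 5, 6, 7, 8, 9], [6, 6, 7, 7, 7, 6, 6, 6, 2, 1], [6, 6, 6, 6, 6, 6, 6, 6, 1, 6], [6, 6, 6, 6, 6, 6, 6, 6, 6, 6]],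
    [[0, 1, 2, 3, 4, 5, 6, 7, 8, 9], [6, 6, 7, 7, 7, 6, 7, 7, 2, 1], [7, 7, 7, 7, 7, 7, 7, 7, 7, 2], [7, 7, 7, 7, 7, 7, 7, 7, 7, 7]],
    [[0, 1, 2, 3, 4, 5, 6, 7, 8, 9], [9, 9, 8, 8, 8, 9, 1, 2, 8, 8], [8, 8, 8, 8, 8, 8, 2, 8, 8, 8], [8, 8, 8, 8, 8, 8, 8, 8, 8, 8]],
    [[0, 1, 2, 3, 4, 5, 6, 7, 8, 9], [9, 9, 8, 8, 8, 9, 1, 2, 9, 9], [9, 9, 9, 9, 9, 9, 9, 1, 9, 9], [9, 9, 9, 9, 9, 9, 9, 9, 9, 9]]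
  ]

/-- The pointed contraction of `MSS18` to basepoint `b`. -/
def ctr (b x : ℤ × ℤ × ℤ) (t : ℕ) : ℤ × ℤ × ℤ :=
  mssL.getD (((tbl.getD (mssL.idxOf b) []).getD t []).getD (mssL.idxOf x) 0) (0,0,0)

lemma mem_mss_iff (x : ℤ × ℤ × ℤ) : x ∈ MSS18 ↔ x ∈ mssL := by
  simp [MSS18, mssL]

lemma keyQ : ∀ b ∈ mssL,
    (∀ x ∈ mssL, ∀ t ≤ 3, ctr b x t ∈ mssL) ∧
    (∀ x ∈ mssL, ctr b x 0 = x) ∧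
    (∀ t ≤ 3, ∀ x ∈ mssL, ∀ y ∈ mssL, adj18 x y → AdjEq adj18 (ctr b x t) (ctr b y t)) ∧
    (∀ x ∈ mssL, ∀ t < 3, AdjEq adj18 (ctr b x t) (ctr b x (t+1))) ∧
    (∀ t ≤ 3, ctr b b t = b) ∧
    (∀ x ∈ mssL, ctr b x 3 = b) := by decide

lemma pointed_mss (b : ℤ × ℤ × ℤ) (hb : b ∈ MSS18) :
    PointedContractible MSS18 adj18 b := by
  rw [mem_mss_iff] at hb
  obtain ⟨h1, h2, h3, h4, h5, h6⟩ := keyQ b hb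
  refine ⟨3, ctr b, ⟨?_, ?_, ⟨b, ?_, ?_⟩, ?_, ?_⟩, h5, ?_⟩
  · intro x hx t ht
    rw [mem_mss_iff] at hx ⊢
    exact h1 x hx t ht
  · intro x hx
    rw [mem_mss_iff] at hx
    exact h2 x hx
  · rw [mem_mss_iff]; exact hb
  · intro x hx
    rw [mem_mss_iff] at hx
    exact h6 x hx
  · intro t ht x hx y hy hxy
    rw [mem_mss_iff] at hx hy
    exact h3 t ht x hx y hy hxy
  · intro x hx t ht
    rw [mem_mss_iff] at hx
    exact h4 x hx t ht
  · intro x hx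
    rw [mem_mss_iff] at hx
    exact h6 x hx

lemma glue {X : Set α} {κ : α → α → Prop} {x0 : α}
    (h : PointedContractible X κ x0) : Pi1Trivial X κ x0 := by
  obtain ⟨M, C, ⟨hin, h0, -, hadj, hstep⟩, hfix, hM⟩ := h
  rintro m f ⟨⟨hmem, hpath⟩, hf0, hfm⟩
  refine ⟨m, f, (fun _ => x0),
    ⟨id, rfl, rfl, fun i _ => Or.inr rfl, fun i _ => rfl⟩,
    ⟨fun _ => 0, rfl, rfl, fun i _ => Or.inl rfl, fun i _ => rfl⟩,
    M, (fun s t => C (f s) t), ?_, ?_, ?_, ?_, ?_⟩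
  · intro s hs t ht
    exact hin (f s) (hmem s hs) t ht
  · intro s hs
    exact ⟨h0 (f s) (hmem s hs), hM (f s) (hmem s hs)⟩
  · intro t ht s hs
    rcases hpath s hs with heq | hk
    · exact Or.inl (show C (f s) t = C (f (s+1)) t by rw [heq])
    · exact hadj t ht (f s) (hmem s (le_of_lt hs)) (f (s+1)) (hmem (s+1) hs) hk
  · intro s hs t ht
    exact hstep (f s) (hmem s hs) t ht
  · intro t ht
    constructor
    · show C (f 0) t = x0
      rw [hf0]; exact hfix t ht
    · show C (f m) t = x0
      rw [hfm]; exact hfix t ht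

/-- `Π₁¹⁸(MSS₁₈, x)` is trivial for every `x ∈ MSS₁₈`. -/
theorem stmt4 : ∀ x ∈ MSS18, Pi1Trivial MSS18 adj18 x := by
  intro x hx
  exact glue (pointed_mss x hx)
end

section
/- Let X be a digital image with two adjacency relations κ and λ such that: (i) κ-adjacent-or-equal points are λ-adjacent-or-equal, and (ii) any two λ-adjacent-or-equal points are joined by a κ-path of length 2 in X. If Π_1^κ(X, x_0) is trivial for some x_0 ∈ X, then Π_1^λ(X, x_0) is trivial. -/
/- ## General framework for digital topology -/

variable {α : Type*}

private lemma phi_mono {φ : ℕ → ℕ} {m' : ℕ}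
    (hstep : ∀ i < m', φ (i + 1) = φ i ∨ φ (i + 1) = φ i + 1) :
    ∀ j ≤ m', ∀ i ≤ j, φ i ≤ φ j := by
  intro j
  induction j with
  | zero =>
    intro _ i hi
    have : i = 0 := by omega
    subst this; exact le_rfl
  | succ n ih =>
    intro hj i hi
    rcases Nat.eq_or_lt_of_le hi with h | h
    · subst h; exact le_rfl
    · have h1 := hstep n (by omega)
      have h2 := ih (by omega) i (by omega)
      omega

/-- comparison of fundamental groups under two adjacencies. -/
theorem stmt5 {β : Type*} (X : Set β) (κ lam : β → β → Prop) (x0 : β) (hx0 : x0 ∈ X)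
    (h1 : ∀ x ∈ X, ∀ y ∈ X, AdjEq κ x y → AdjEq lam x y)
    (h2 : ∀ x ∈ X, ∀ y ∈ X, AdjEq lam x y →
      ∃ f : ℕ → β, PathOn X κ 2 f ∧ f 0 = x ∧ f 2 = y)
    (h3 : Pi1Trivial X κ x0) :
    Pi1Trivial X lam x0 := by
  classical
  intro m f hf
  obtain ⟨⟨hmem, hadj⟩, hf0, hfm⟩ := hf
  have key : ∀ i, i < m → ∃ p : ℕ → β, PathOn X κ 2 p ∧ p 0 = f i ∧ p 2 = f (i+1) := by
    intro i hi
    exact h2 (f i) (hmem i hi.le) (f (i+1)) (hmem (i+1) hi) (hadj i hi)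
  choose p hp using key
  set p' : ℕ → ℕ → β := fun i => if h : i < m then p i h else fun _ => x0 with hp'def
  have hp' : ∀ i (h : i < m), PathOn X κ 2 (p' i) ∧ p' i 0 = f i ∧ p' i 2 = f (i+1) := by
    intro i h; simp only [hp'def, dif_pos h]; exact hp i h
  set g : ℕ → β := fun j => if j % 2 = 0 then f (j/2) else p' (j/2) 1 with hgdef
  have hg_even : ∀ k, g (2*k) = f k := by
    intro k; simp only [hgdef]; norm_num [Nat.mul_div_cancel_left]
  have hg_odd : ∀ k, g (2*k+1) = p' k 1 := by
    intro k; simp only [hgdef]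
    have h1' : (2*k+1) % 2 = 1 := by omega
    have h2' : (2*k+1) / 2 = k := by omega
    rw [h1', h2']; simp
  have hgpath : IsLoop X κ x0 (2*m) g := by
    refine ⟨⟨?_, ?_⟩, ?_, ?_⟩
    · intro j hj
      rcases Nat.even_or_odd j with ⟨k, hk⟩ | ⟨k, hk⟩
      · subst hk
        rw [show k + k = 2*k by ring, hg_even]
        exact hmem k (by omega)
      · subst hk
        have hk' : k < m := by omega
        rw [hg_odd]
        exact ((hp' k hk').1).1 1 (by omega)
    · intro j hj
      rcases Nat.even_or_odd j with ⟨k, hk⟩ | ⟨k, hk⟩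
      · subst hk
        have hk' : k < m := by omega
        rw [show k + k = 2*k by ring, hg_even, show 2*k+1 = 2*k+1 from rfl, hg_odd]
        have := ((hp' k hk').1).2 0 (by omega)
        rw [(hp' k hk').2.1] at this
        exact this
      · subst hk
        have hk' : k < m := by omega
        rw [show 2*k+1+1 = 2*(k+1) by ring, hg_even,
            show 2*k+1 = 2*k+1 from rfl, hg_odd]
        have := ((hp' k hk').1).2 1 (by omega)
        rw [(hp' k hk').2.2] at this
        exact this
    · rw [show (0:ℕ) = 2*0 by ring, hg_even]; exact hf0
    · rw [hg_even]; exact hfm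
  obtain ⟨m', g'', c'', ⟨φ, hφ0, hφm, hφstep, hφval⟩, hc'', M, H2, H2mem, H2ends, H2horiz, H2vert, H2base⟩ :=
    h3 (2*m) g hgpath
  have hφle : ∀ s ≤ m', φ s ≤ 2*m := by
    intro s hs
    have := phi_mono hφstep m' le_rfl s hs
    omega
  refine ⟨m', fun s => f (φ s / 2), c'',
    ⟨fun s => φ s / 2, by show φ 0 / 2 = 0; rw [hφ0],
     by show φ m' / 2 = m; rw [hφm]; omega, ?_, fun _ _ => rfl⟩,
    hc'', M + 1, fun s t => if t = 0 then f (φ s / 2) else H2 s (t-1),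
    ?_, ?_, ?_, ?_, ?_⟩
  · intro i hi
    show φ (i+1) / 2 = φ i / 2 ∨ φ (i+1) / 2 = φ i / 2 + 1
    rcases hφstep i hi with h | h <;> omega
  · -- membership
    intro s hs t ht
    by_cases h : t = 0
    · simp only [h, if_pos rfl]
      exact hmem _ (by have := hφle s hs; omega)
    · simp only [if_neg h]
      exact H2mem s hs (t-1) (by omega)
  · -- ends
    intro s hs
    constructor
    · simp
    · have hM : M + 1 ≠ 0 := by omega
      simp only [if_neg hM]
      have := (H2ends s hs).2
      simpa using this
  · -- horizontal
    intro t ht s hs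
    by_cases h : t = 0
    · subst h
      simp only [if_pos rfl, eq_self_iff_true, if_true]
      rcases hφstep s hs with hst | hst
      · left; rw [hst]
      · rw [hst]
        by_cases he : (φ s + 1) / 2 = φ s / 2
        · left; rw [he]
        · have he2 : (φ s + 1) / 2 = φ s / 2 + 1 := by omega
          rw [he2]
          have hlt : φ s / 2 < m := by
            have h1' := hφle (s+1) hs
            rw [hst] at h1'
            omega
          exact hadj (φ s / 2) hlt
    · simp only [if_neg h]
      have hk := H2horiz (t-1) (by omega) s hs
      have ha := h1 _ (H2mem s (by omega) (t-1) (by omega)) _ (H2mem (s+1) (by omega) (t-1) (by omega))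
      rcases hk with hk | hk
      · left; exact hk
      · exact ha (Or.inr hk)
  · -- vertical
    intro s hs t htlt
    by_cases h : t = 0
    · subst h
      simp only [if_pos rfl, eq_self_iff_true, if_true, if_neg (by norm_num : (1:ℕ) ≠ 0)]
      have hH20 : H2 s (1 - 1) = g (φ s) := by
        have := (H2ends s hs).1
        simpa using (this.trans (hφval s hs))
      rw [hH20]
      rcases Nat.even_or_odd (φ s) with ⟨k, hk⟩ | ⟨k, hk⟩
      · rw [hk, show k + k = 2*k by ring, hg_even]
        left
        congr 1
        omega
      · have hk' : k < m := by have := hφle s hs; omega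
        rw [hk, show (2*k+1) / 2 = k by omega, hg_odd]
        have hstep0 := ((hp' k hk').1).2 0 (by omega)
        rw [(hp' k hk').2.1] at hstep0
        exact h1 _ (hmem k hk'.le) _ (((hp' k hk').1).1 1 (by omega)) hstep0
    · simp only [if_neg h, if_neg (by omega : t + 1 ≠ 0)]
      have hk := H2vert s hs (t-1) (by omega)
      have ha := h1 _ (H2mem s hs (t-1) (by omega)) _ (H2mem s hs t (by omega))
      rw [show t - 1 + 1 = t by omega] at hk
      rcases hk with hk | hk
      · left; exact hk
      · exact ha (Or.inr hk)
  · -- basepoint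
    intro t ht
    by_cases h : t = 0
    · subst h
      simp only [if_pos rfl, eq_self_iff_true, if_true]
      constructor
      · rw [hφ0]; simpa using hf0
      · rw [hφm, show 2*m/2 = m by omega]
        exact hfm
    · simp only [if_neg h]
      exact H2base (t-1) (by omega)
end

section
/- For any x ∈ MSS_6 = [0,2]_Z^3 \ {(1,1,1)}, the fundamental group Π_1^6(MSS_6, x) is trivial. -/
/- ## General framework for digital topology -/

variable {α : Type*}

/-!
A loop in `MSS₆` is first pushed off the top centre `(1,1,2)` by a one-step homotopy: every run
of visits to that point is replaced by one of its four neighbours, chosen opposite to neither the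
neighbour where the run is entered nor the one where it is left, and corners of the top face are
inserted where needed. The pushed loop lies in `MSS₆ \ {(1,1,2)}`, which contracts to the origin by
flattening the `z`-, `x`- and `y`-directions in turn, so the loop is freely nullhomotopic. Dragging
the basepoint back along its track under this free homotopy gives a nullhomotopy rel basepoint.
The basepoint `(1,1,2)` itself is reduced to `(1,1,0)` by the reflection `z ↦ 2 - z`.
-/

theorem AdjEq.refl (κ : α → α → Prop) (a : α) : AdjEq κ a a := Or.inl rfl

theorem AdjEq.symm {κ : α → α → Prop} [Std.Symm κ] {a b : α} (h : AdjEq κ a b) :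
    AdjEq κ b a :=
  h.imp Eq.symm _root_.symm

theorem AdjEq.map {β : Type*} {κ : α → α → Prop} {κ' : β → β → Prop} {r : α → β}
    (hr : ∀ a b, κ a b → κ' (r a) (r b)) {a b : α} (h : AdjEq κ a b) : AdjEq κ' (r a) (r b) :=
  h.imp (congrArg r) (hr a b)

theorem le_of_forall_lt_succ_eq_or_eq_succ {φ : ℕ → ℕ} {n : ℕ}
    (h : ∀ i < n, φ (i + 1) = φ i ∨ φ (i + 1) = φ i + 1) {i : ℕ} (hi : i ≤ n) : φ i ≤ φ n := by
  induction n with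
  | zero => rw [Nat.le_zero.mp hi]
  | succ n ih =>
    rcases Nat.of_le_succ hi with hi | rfl
    · have := ih (fun j hj => h j (by omega)) hi
      rcases h n n.lt_succ_self with e | e <;> omega
    · exact le_rfl

theorem PathOn.mono {X Y : Set α} (hXY : X ⊆ Y) {κ : α → α → Prop} {m : ℕ} {f : ℕ → α}
    (h : PathOn X κ m f) : PathOn Y κ m f :=
  ⟨fun i hi => hXY (h.1 i hi), h.2⟩

structure IsPaddedLoop (X : Set α) (κ : α → α → Prop) (m : ℕ) (F : ℕ → α) : Prop where
  mem : ∀ i, F i ∈ X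
  adjEq_succ : ∀ i, AdjEq κ (F i) (F (i + 1))
  eq_of_le : ∀ k, m ≤ k → F k = F 0

theorem IsLoop.isPaddedLoop {X : Set α} {κ : α → α → Prop} {x0 : α} {m : ℕ} {f : ℕ → α}
    (h : IsLoop X κ x0 m f) : IsPaddedLoop X κ m (fun i => f (min i m)) := by
  obtain ⟨⟨hX, hstep⟩, hf0, hfm⟩ := h
  refine ⟨fun i => hX _ (min_le_right i m), fun i => ?_, fun k hk => ?_⟩
  · rcases lt_or_ge i m with hi | hi
    · rw [min_eq_left hi.le, min_eq_left (Nat.succ_le_of_lt hi)]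
      exact hstep i hi
    · rw [min_eq_right hi, min_eq_right (by omega)]
      exact AdjEq.refl κ _
  · rw [min_eq_right hk, Nat.zero_min, hfm, hf0]

section Loops

variable {X : Set α} {κ : α → α → Prop} {x0 : α}

theorem TrivExt.trans {m m' m'' : ℕ} {f f' f'' : ℕ → α} (h : TrivExt m f m' f')
    (h' : TrivExt m' f' m'' f'') : TrivExt m f m'' f'' := by
  obtain ⟨φ, hφ0, hφm, hφstep, hφf⟩ := h
  obtain ⟨ψ, hψ0, hψm, hψstep, hψf⟩ := h'
  refine ⟨φ ∘ ψ, by simp [hψ0, hφ0], by simp [hψm, hφm], fun i hi => ?_, fun i hi => ?_⟩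
  · rcases hψstep i hi with e | e <;> rw [Function.comp_apply, Function.comp_apply, e]
    · exact Or.inl rfl
    · exact hφstep _ (by have := le_of_forall_lt_succ_eq_or_eq_succ hψstep (i := i + 1) hi; omega)
  · rw [hψf i hi, hφf _ (hψm ▸ le_of_forall_lt_succ_eq_or_eq_succ hψstep hi), Function.comp]

theorem TrivExt.comp {β : Type*} (r : α → β) {m m' : ℕ} {f f' : ℕ → α}
    (h : TrivExt m f m' f') : TrivExt m (r ∘ f) m' (r ∘ f') := by
  obtain ⟨φ, hφ0, hφm, hφstep, hφf⟩ := h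
  exact ⟨φ, hφ0, hφm, hφstep, fun i hi => by simp [hφf i hi]⟩

theorem LoopEquiv.of_trivExt {m m' n : ℕ} {f f' g : ℕ → α} (h : TrivExt m f m' f')
    (h' : LoopEquiv X κ x0 m' f' n g) : LoopEquiv X κ x0 m f n g := by
  obtain ⟨k, f'', g'', hf'', hg'', hH⟩ := h'
  exact ⟨k, f'', g'', h.trans hf'', hg'', hH⟩

end Loops

section Maps

variable {β : Type*} {X : Set α} {κ : α → α → Prop} {Y : Set β} {κ' : β → β → Prop} {r : α → β}

theorem IsLoop.comp (hrX : Set.MapsTo r X Y) (hr : ∀ a b, κ a b → κ' (r a) (r b))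
    {x0 : α} {m : ℕ} {f : ℕ → α} (h : IsLoop X κ x0 m f) : IsLoop Y κ' (r x0) m (r ∘ f) := by
  obtain ⟨⟨hfX, hfstep⟩, hf0, hfm⟩ := h
  exact ⟨⟨fun i hi => hrX (hfX i hi), fun i hi => AdjEq.map hr (hfstep i hi)⟩,
    congrArg r hf0, congrArg r hfm⟩

theorem HtpyFixed.comp (hrX : Set.MapsTo r X Y) (hr : ∀ a b, κ a b → κ' (r a) (r b))
    {x0 : α} {m M : ℕ} {F G : ℕ → α} (h : HtpyFixed X κ x0 m M F G) :
    HtpyFixed Y κ' (r x0) m M (r ∘ F) (r ∘ G) := by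
  obtain ⟨H, hX, hFG, hrow, hcol, hends⟩ := h
  exact ⟨fun s t => r (H s t), fun s hs t ht => hrX (hX s hs t ht),
    fun s hs => ⟨congrArg r (hFG s hs).1, congrArg r (hFG s hs).2⟩,
    fun t ht s hs => AdjEq.map hr (hrow t ht s hs), fun s hs t ht => AdjEq.map hr (hcol s hs t ht),
    fun t ht => ⟨congrArg r (hends t ht).1, congrArg r (hends t ht).2⟩⟩

theorem LoopEquiv.comp (hrX : Set.MapsTo r X Y) (hr : ∀ a b, κ a b → κ' (r a) (r b))
    {x0 : α} {m n : ℕ} {f g : ℕ → α} (h : LoopEquiv X κ x0 m f n g) :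
    LoopEquiv Y κ' (r x0) m (r ∘ f) n (r ∘ g) := by
  obtain ⟨k, f', g', hf', hg', M, hH⟩ := h
  exact ⟨k, r ∘ f', r ∘ g', hf'.comp r, hg'.comp r, M, hH.comp hrX hr⟩

theorem Pi1Trivial.of_leftInverse {e : β → α} (heY : Set.MapsTo e Y X)
    (he : ∀ a b, κ' a b → κ (e a) (e b)) (hrX : Set.MapsTo r X Y)
    (hr : ∀ a b, κ a b → κ' (r a) (r b)) (hre : Function.LeftInverse r e) {y0 : β}
    (h : Pi1Trivial X κ (e y0)) : Pi1Trivial Y κ' y0 := by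
  intro m f hf
  have := (h m (e ∘ f) (hf.comp heY he)).comp hrX hr
  rw [← Function.comp_assoc, hre.comp_eq_id, Function.id_comp, hre y0] at this
  simpa only [Function.comp_def, hre y0] using this

end Maps

section LoopPreserving

variable {X : Set α} {κ : α → α → Prop} {m : ℕ}

theorem LoopPresHtpy.mono {Y : Set α} (hXY : X ⊆ Y) {M : ℕ} {f g : ℕ → α} {H : ℕ → ℕ → α}
    (h : LoopPresHtpy X κ m M f g H) : LoopPresHtpy Y κ m M f g H :=
  ⟨fun s hs t ht => hXY (h.1 s hs t ht), h.2⟩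

theorem LoopPresHtpy.trans {M N : ℕ} {f g k : ℕ → α} {H K : ℕ → ℕ → α}
    (hH : LoopPresHtpy X κ m M f g H) (hK : LoopPresHtpy X κ m N g k K) :
    LoopPresHtpy X κ m (M + N) f k (fun s t => if t ≤ M then H s t else K s (t - M)) := by
  obtain ⟨hHX, hHfg, hHrow, hHcol, hHloop⟩ := hH
  obtain ⟨hKX, hKgk, hKrow, hKcol, hKloop⟩ := hK
  refine ⟨fun s hs t ht => ?_, fun s hs => ?_, fun t ht s hs => ?_, fun s hs t ht => ?_,
    fun t ht => ?_⟩ <;> dsimp only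
  · split_ifs
    exacts [hHX s hs t ‹_›, hKX s hs _ (by omega)]
  · refine ⟨by rw [if_pos (Nat.zero_le M), (hHfg s hs).1], ?_⟩
    split_ifs with hN
    · obtain rfl : N = 0 := by omega
      rw [Nat.add_zero, (hHfg s hs).2, ← (hKgk s hs).1, (hKgk s hs).2]
    · rw [Nat.add_sub_cancel_left, (hKgk s hs).2]
  · split_ifs
    exacts [hHrow t ‹_› s hs, hKrow _ (by omega) s hs]
  · by_cases htM : t + 1 ≤ M
    · rw [if_pos (by omega), if_pos htM]; exact hHcol s hs t htM
    · rw [if_neg htM, show t + 1 - M = t - M + 1 by omega]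
      split_ifs with ht'
      · rw [show t = M by omega, (hHfg s hs).2, ← (hKgk s hs).1, Nat.sub_self]
        exact hKcol s hs 0 (by omega)
      · exact hKcol s hs _ (by omega)
  · split_ifs
    exacts [hHloop t ‹_›, hKloop _ (by omega)]

theorem loopPresHtpy_of_adjEq {f g : ℕ → α} (hf : PathOn X κ m f) (hg : PathOn X κ m g)
    (hfm : f 0 = f m) (hgm : g 0 = g m) (hfg : ∀ s ≤ m, AdjEq κ (f s) (g s)) :
    LoopPresHtpy X κ m 1 f g (fun s t => if t = 0 then f s else g s) := by
  refine ⟨fun s hs t _ => ?_, fun s _ => ⟨rfl, rfl⟩, fun t _ s hs => ?_, fun s hs t ht => ?_,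
    fun t _ => ?_⟩ <;> dsimp only
  · split_ifs; exacts [hf.1 s hs, hg.1 s hs]
  · split_ifs; exacts [hf.2 s hs, hg.2 s hs]
  · rw [Nat.lt_one_iff.mp ht]; exact hfg s hs
  · split_ifs; exacts [hfm, hgm]

theorem Contractible.noLoophole (h : Contractible X κ) : NoLoophole X κ := by
  obtain ⟨M, H, hX, h0, ⟨p, hp, hM⟩, hadj, hstep⟩ := h
  intro m f hf hloop
  refine ⟨p, hp, M, fun s t => H (f s) t, fun s hs t ht => hX _ (hf.1 s hs) t ht,
    fun s hs => ⟨h0 _ (hf.1 s hs), hM _ (hf.1 s hs)⟩, fun t ht s hs => ?_,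
    fun s hs t ht => hstep _ (hf.1 s hs) t ht, fun t _ => congrArg (H · t) hloop⟩
  rcases hf.2 s hs with e | e
  · exact Or.inl (congrArg (H · t) e)
  · exact hadj t ht _ (hf.1 s hs.le) _ (hf.1 (s + 1) hs) e

end LoopPreserving

section Conjugation

variable {X : Set α} {κ : α → α → Prop} {m M : ℕ} {f : ℕ → α} {p : α} {H : ℕ → ℕ → α}

/-- For `t ≤ M`, row `t` walks out along the basepoint track `H 0 ·` up to time `t`, runs the
loop `H · t`, and walks back; during the times `M, …, 2M` the two tracks are pulled in. -/
def conjugateHtpy (m M : ℕ) (H : ℕ → ℕ → α) (s t : ℕ) : α :=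
  if M ≤ s ∧ s ≤ M + m ∧ t ≤ M then H (s - M) t
  else H 0 (min (min s (2 * M + m - s)) (min t (2 * M - t)))

theorem LoopPresHtpy.adjEq_track [Std.Symm κ] (hH : LoopPresHtpy X κ m M f (fun _ => p) H)
    {a b : ℕ} (ha : a ≤ M) (hb : b ≤ M) (hab : a ≤ b + 1 ∧ b ≤ a + 1) :
    AdjEq κ (H 0 a) (H 0 b) := by
  rcases (by omega : a = b ∨ b = a + 1 ∨ a = b + 1) with rfl | rfl | rfl
  · exact AdjEq.refl κ _
  · exact hH.2.2.2.1 0 (Nat.zero_le m) a (by omega)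
  · exact AdjEq.symm (hH.2.2.2.1 0 (Nat.zero_le m) b (by omega))

theorem LoopPresHtpy.conjugateHtpy_mem (hH : LoopPresHtpy X κ m M f (fun _ => p) H)
    {s t : ℕ} (ht : t ≤ 2 * M) : conjugateHtpy m M H s t ∈ X := by
  unfold conjugateHtpy
  split_ifs with h
  · exact hH.1 _ (by omega) t h.2.2
  · exact hH.1 0 (Nat.zero_le m) _ (by omega)

theorem LoopPresHtpy.conjugateHtpy_row [Std.Symm κ] (hH : LoopPresHtpy X κ m M f (fun _ => p) H)
    {s t : ℕ} (ht : t ≤ 2 * M) :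
    AdjEq κ (conjugateHtpy m M H s t) (conjugateHtpy m M H (s + 1) t) := by
  unfold conjugateHtpy
  by_cases h : M ≤ s ∧ s ≤ M + m ∧ t ≤ M <;> by_cases h' : M ≤ s + 1 ∧ s + 1 ≤ M + m ∧ t ≤ M
  · rw [if_pos h, if_pos h', show s + 1 - M = s - M + 1 by omega]
    exact hH.2.2.1 t h.2.2 (s - M) (by omega)
  · rw [if_pos h, if_neg h', show s - M = m by omega, ← hH.2.2.2.2 t h.2.2]
    exact hH.adjEq_track (by omega) (by omega) (by omega)
  · rw [if_neg h, if_pos h', show s + 1 - M = 0 by omega]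
    exact hH.adjEq_track (by omega) (by omega) (by omega)
  · rw [if_neg h, if_neg h']
    exact hH.adjEq_track (by omega) (by omega) (by omega)

theorem LoopPresHtpy.conjugateHtpy_col [Std.Symm κ] (hH : LoopPresHtpy X κ m M f (fun _ => p) H)
    {s t : ℕ} (ht : t < 2 * M) :
    AdjEq κ (conjugateHtpy m M H s t) (conjugateHtpy m M H s (t + 1)) := by
  unfold conjugateHtpy
  by_cases h : M ≤ s ∧ s ≤ M + m ∧ t ≤ M <;> by_cases h' : M ≤ s ∧ s ≤ M + m ∧ t + 1 ≤ M
  · rw [if_pos h, if_pos h']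
    exact hH.2.2.2.1 (s - M) (by omega) t (by omega)
  · have hp : H (s - M) M = H 0 M := (hH.2.1 _ (by omega)).2.trans (hH.2.1 0 (by omega)).2.symm
    rw [if_pos h, if_neg h', show t = M by omega, hp]
    exact hH.adjEq_track (by omega) (by omega) (by omega)
  · exact absurd ⟨h'.1, h'.2.1, by omega⟩ h
  · rw [if_neg h, if_neg h']
    exact hH.adjEq_track (by omega) (by omega) (by omega)

theorem LoopPresHtpy.loopEquiv_const [Std.Symm κ]
    (hH : LoopPresHtpy X κ m M f (fun _ => p) H) {x0 : α} (hf0 : f 0 = x0) :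
    LoopEquiv X κ x0 m f 0 (fun _ => x0) := by
  have hfH : ∀ s ≤ m, H s 0 = f s := fun s hs => (hH.2.1 s hs).1
  have hH0 : H 0 0 = x0 := (hfH 0 (Nat.zero_le m)).trans hf0
  have hM0 : M = 0 → ∀ s ≤ m, H s 0 = x0 := fun hM s hs => by
    subst hM; exact (hH.2.1 s hs).2.trans ((hH.2.1 0 (Nat.zero_le m)).2.symm.trans hH0)
  refine ⟨2 * M + m, fun s => conjugateHtpy m M H s 0, fun _ => x0,
    ⟨fun s => min (s - M) m, by simp, by dsimp only; omega, fun i _ => by dsimp only; omega,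
      fun i hi => ?_⟩,
    ⟨fun _ => 0, rfl, rfl, fun _ _ => Or.inl rfl, fun _ _ => rfl⟩,
    2 * M, conjugateHtpy m M H, fun s _ t ht => hH.conjugateHtpy_mem ht,
    fun s hs => ⟨rfl, ?_⟩, fun t ht s _ => hH.conjugateHtpy_row ht,
    fun s _ t ht => hH.conjugateHtpy_col ht, fun t ht => ⟨?_, ?_⟩⟩ <;>
    beta_reduce <;> unfold conjugateHtpy <;> split_ifs with h
  · rw [hfH _ (by omega), show min (i - M) m = i - M by omega]
  · rw [Nat.zero_min, Nat.min_zero, hH0, ← hf0]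
    rcases (by omega : min (i - M) m = 0 ∨ min (i - M) m = m) with e | e <;> rw [e]
    rw [← hfH m le_rfl, ← hH.2.2.2.2 0 (Nat.zero_le M), hfH 0 (Nat.zero_le m)]
  · rw [show 2 * M = 0 by omega]; exact hM0 (by omega) _ (by omega)
  · rw [Nat.sub_self, Nat.min_zero, Nat.min_zero, hH0]
  · rw [show t = 0 by omega]; exact hM0 (by omega) _ (by omega)
  · rw [Nat.zero_min, Nat.zero_min, hH0]
  · rw [show t = 0 by omega]; exact hM0 (by omega) _ (by omega)
  · rw [Nat.sub_self, Nat.min_zero, Nat.zero_min, hH0]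

end Conjugation

section Interleave

variable {β : Type*}

def interleave (a b : ℕ → α) (s : ℕ) : α := if s % 2 = 0 then a (s / 2) else b (s / 2)

@[simp] theorem interleave_two_mul (a b : ℕ → α) (i : ℕ) : interleave a b (2 * i) = a i := by
  simp [interleave]

@[simp] theorem interleave_two_mul_add_one (a b : ℕ → α) (i : ℕ) :
    interleave a b (2 * i + 1) = b i := by
  simp [interleave, Nat.add_mod, show (2 * i + 1) / 2 = i by omega]

theorem interleave_of_forall {P : α → Prop} {a b : ℕ → α} (ha : ∀ i, P (a i))
    (hb : ∀ i, P (b i)) (s : ℕ) : P (interleave a b s) := by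
  obtain ⟨i, rfl | rfl⟩ := Nat.even_or_odd' s <;> simp [ha, hb]

theorem interleave_rel {R : α → β → Prop} {a b : ℕ → α} {a' b' : ℕ → β}
    (ha : ∀ i, R (a i) (a' i)) (hb : ∀ i, R (b i) (b' i)) (s : ℕ) :
    R (interleave a b s) (interleave a' b' s) := by
  obtain ⟨i, rfl | rfl⟩ := Nat.even_or_odd' s <;> simp [ha, hb]

theorem interleave_rel_succ {R : α → α → Prop} {a b : ℕ → α}
    (hab : ∀ i, R (a i) (b i)) (hba : ∀ i, R (b i) (a (i + 1))) (s : ℕ) :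
    R (interleave a b s) (interleave a b (s + 1)) := by
  obtain ⟨i, rfl | rfl⟩ := Nat.even_or_odd' s
  · simpa using hab i
  · simpa [show 2 * i + 1 + 1 = 2 * (i + 1) by ring] using hba i

end Interleave

local notation "ℤ³" => ℤ × ℤ × ℤ

instance : Std.Symm adj6 := ⟨fun p q h => by simpa only [adj6, abs_sub_comm] using h⟩

instance : DecidableRel adj6 := fun _ _ => inferInstanceAs (Decidable (_ = _))

instance : DecidableRel (AdjEq adj6) := fun _ _ => inferInstanceAs (Decidable (_ ∨ _))

instance (p : ℤ³) : Decidable (p ∈ MSS6) := inferInstanceAs (Decidable (_ ∧ _ ∧ _ ∧ _))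

theorem adjEq_adj6_of_le_one {p q : ℤ³}
    (h : |p.1 - q.1| + |p.2.1 - q.2.1| + |p.2.2 - q.2.2| ≤ 1) : AdjEq adj6 p q := by
  obtain ⟨a, b, c⟩ := p
  obtain ⟨a', b', c'⟩ := q
  simp only [AdjEq, adj6, Prod.mk.injEq, Int.abs_eq_natAbs] at h ⊢
  omega

def topCenter : ℤ³ := (1, 1, 2)

def puncturedMSS6 : Set ℤ³ := {p | p ∈ MSS6 ∧ p ≠ topCenter}

instance (p : ℤ³) : Decidable (p ∈ puncturedMSS6) := inferInstanceAs (Decidable (_ ∧ _))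

section Collapse

/-- Clamps `p` into a box whose `z`-, `x`- and `y`-sides shrink from `2` to `0` in turn
(truncated subtraction in `ℕ` keeps each side at `2` until its turn). -/
def collapse (p : ℤ³) (t : ℕ) : ℤ³ :=
  (min p.1 (min 2 (4 - t) : ℕ), min p.2.1 (min 2 (6 - t) : ℕ), min p.2.2 (2 - t : ℕ))

theorem collapse_adjEq {p q : ℤ³} (h : adj6 p q) (t : ℕ) :
    AdjEq adj6 (collapse p t) (collapse q t) := by
  have key (a b c : ℤ) : |min a c - min b c| ≤ |a - b| := by
    simpa using abs_min_sub_min_le_max a c b c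
  apply adjEq_adj6_of_le_one
  unfold adj6 at h
  simp only [collapse]
  linarith [key p.1 q.1 (min 2 (4 - t) : ℕ), key p.2.1 q.2.1 (min 2 (6 - t) : ℕ),
    key p.2.2 q.2.2 (2 - t : ℕ)]

theorem collapse_succ_adjEq (p : ℤ³) (t : ℕ) : AdjEq adj6 (collapse p t) (collapse p (t + 1)) := by
  have key (a c c' : ℤ) (h : c' ≤ c) : |min a c - min a c'| ≤ c - c' := by
    calc |min a c - min a c'| ≤ max |a - a| |c - c'| := abs_min_sub_min_le_max a c a c'
      _ = c - c' := by
        rw [sub_self, abs_zero, abs_of_nonneg (sub_nonneg.mpr h), max_eq_right (sub_nonneg.mpr h)]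
  have hx := key p.1 (min 2 (4 - t) : ℕ) (min 2 (4 - (t + 1)) : ℕ) (by omega)
  have hy := key p.2.1 (min 2 (6 - t) : ℕ) (min 2 (6 - (t + 1)) : ℕ) (by omega)
  have hz := key p.2.2 (2 - t : ℕ) (2 - (t + 1) : ℕ) (by omega)
  have hsides : ((min 2 (4 - t) : ℕ) - (min 2 (4 - (t + 1)) : ℕ) : ℤ) + ((min 2 (6 - t) : ℕ) -
      (min 2 (6 - (t + 1)) : ℕ)) + ((2 - t : ℕ) - (2 - (t + 1) : ℕ)) ≤ 1 := by omega
  apply adjEq_adj6_of_le_one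
  unfold collapse
  linarith

theorem collapse_mem {p : ℤ³} (hp : p ∈ puncturedMSS6) (t : ℕ) : collapse p t ∈ puncturedMSS6 := by
  obtain ⟨x, y, z⟩ := p
  simp only [puncturedMSS6, MSS6, topCenter, collapse, Set.mem_ofPred_eq, ne_eq, Prod.mk.injEq]
    at hp ⊢
  omega

theorem puncturedMSS6_contractible : Contractible puncturedMSS6 adj6 := by
  refine ⟨6, collapse, fun p hp t _ => collapse_mem hp t, fun p hp => ?_,
    ⟨(0, 0, 0), by decide, fun p hp => ?_⟩, fun t _ p _ q _ h => collapse_adjEq h t,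
    fun p _ t _ => collapse_succ_adjEq p t⟩ <;>
  · obtain ⟨x, y, z⟩ := p
    simp only [puncturedMSS6, MSS6, Set.mem_ofPred_eq] at hp
    simp only [collapse, Prod.mk.injEq]
    omega

end Collapse

section TopFace

def topCenterNbrs : Finset ℤ³ := {(0, 1, 2), (2, 1, 2), (1, 0, 2), (1, 2, 2)}

theorem mem_topCenterNbrs_of_adj6 {p : ℤ³} (hp : p ∈ MSS6) (h : adj6 p topCenter) :
    p ∈ topCenterNbrs := by
  obtain ⟨x, y, z⟩ := p
  simp only [MSS6, Set.mem_ofPred_eq, adj6, topCenter, topCenterNbrs, Finset.mem_insert,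
    Finset.mem_singleton, ne_eq, Prod.mk.injEq, Int.abs_eq_natAbs] at hp h ⊢
  omega

theorem adj6_topCenter_of_mem : ∀ w ∈ topCenterNbrs, adj6 topCenter w := by decide

theorem mem_puncturedMSS6_of_mem_topCenterNbrs : ∀ w ∈ topCenterNbrs, w ∈ puncturedMSS6 := by decide

/-- The neighbours `u`, `v` of `topCenter` are opposite iff `u + v = topCenter + topCenter`;
in that case a quarter turn of `u` is opposite to neither. -/
def reroute (u v : ℤ³) : ℤ³ := if u + v = topCenter + topCenter then (2 - u.2.1, u.1, 2) else u

/-- For non-opposite neighbours `a ≠ b` of `topCenter`, `a + b - topCenter` is the corner of the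
top face adjacent to both. -/
def bridge (a b : ℤ³) : ℤ³ := if AdjEq adj6 a b then a else a + b - topCenter

def Bridged (a b : ℤ³) : Prop :=
  AdjEq adj6 a (bridge a b) ∧ AdjEq adj6 (bridge a b) b ∧ bridge a b ∈ puncturedMSS6

instance : DecidableRel Bridged := fun _ _ => inferInstanceAs (Decidable (_ ∧ _ ∧ _))

theorem bridge_self (a : ℤ³) : bridge a a = a := if_pos (AdjEq.refl _ a)

theorem bridged_of_adjEq {a b : ℤ³} (ha : a ∈ puncturedMSS6) (h : AdjEq adj6 a b) :
    Bridged a b := by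
  simp only [Bridged, bridge, if_pos h]
  exact ⟨AdjEq.refl _ a, h, ha⟩

theorem reroute_spec : ∀ u ∈ topCenterNbrs, ∀ v ∈ topCenterNbrs,
    reroute u v ∈ topCenterNbrs ∧ Bridged u (reroute u v) ∧ Bridged (reroute u v) v := by
  decide

end TopFace

section PushOff

variable (F : ℕ → ℤ³)

def prevOff (i : ℕ) : ℕ := Nat.findGreatest (fun k => F k ≠ topCenter) i

noncomputable def nextOff (i : ℕ) : ℕ := sInf {k | i ≤ k ∧ F k ≠ topCenter}

noncomputable def rerouted (i : ℕ) : ℤ³ :=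
  if F i = topCenter then reroute (F (prevOff F i)) (F (nextOff F i)) else F i

/-- Each step of `F` is doubled; the slot holding a `bridge` in `pushedOff F` reads the end of
its step that is not `topCenter`, making `F ∘ stretchIdx F` and `pushedOff F` pointwise adjacent. -/
def stretchIdx : ℕ → ℕ := interleave id (fun i => if F i = topCenter then i + 1 else i)

noncomputable def pushedOff : ℕ → ℤ³ :=
  interleave (rerouted F) (fun i => bridge (rerouted F i) (rerouted F (i + 1)))

variable {F}

theorem stretchIdx_succ (s : ℕ) :
    stretchIdx F (s + 1) = stretchIdx F s ∨ stretchIdx F (s + 1) = stretchIdx F s + 1 :=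
  interleave_rel_succ (R := fun x y => y = x ∨ y = x + 1)
    (fun i => by split_ifs <;> simp) (fun i => by split_ifs <;> simp) s

theorem stretchIdx_two_mul (i : ℕ) : stretchIdx F (2 * i) = i := interleave_two_mul _ _ i

theorem stretchIdx_zero : stretchIdx F 0 = 0 := stretchIdx_two_mul 0

theorem prevOff_eq_self {i : ℕ} (h : F i ≠ topCenter) : prevOff F i = i := Nat.findGreatest_eq h

theorem nextOff_eq_self {i : ℕ} (h : F i ≠ topCenter) : nextOff F i = i :=
  le_antisymm (Nat.sInf_le ⟨le_rfl, h⟩) (le_csInf ⟨i, le_rfl, h⟩ fun _ hk => hk.1)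

theorem rerouted_eq_self {i : ℕ} (h : F i ≠ topCenter) : rerouted F i = F i := if_neg h

theorem prevOff_succ {i : ℕ} (h : F (i + 1) = topCenter) : prevOff F (i + 1) = prevOff F i := by
  rw [prevOff, Nat.findGreatest_succ, if_neg (not_not.mpr h)]; rfl

theorem nextOff_succ {i : ℕ} (h : F i = topCenter) : nextOff F (i + 1) = nextOff F i := by
  refine congrArg sInf (Set.ext fun k => ⟨fun ⟨hk, hFk⟩ => ⟨by omega, hFk⟩, fun ⟨hk, hFk⟩ => ?_⟩)
  exact ⟨lt_of_le_of_ne hk (by rintro rfl; exact hFk h), hFk⟩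

theorem rerouted_succ {i : ℕ} (h : F i = topCenter) (h' : F (i + 1) = topCenter) :
    rerouted F (i + 1) = rerouted F i := by
  rw [rerouted, rerouted, if_pos h, if_pos h', prevOff_succ h', nextOff_succ h]

theorem prevOff_mem_topCenterNbrs (hX : ∀ i, F i ∈ MSS6)
    (hstep : ∀ i, AdjEq adj6 (F i) (F (i + 1))) (h0 : F 0 ≠ topCenter) {i : ℕ}
    (h : F i = topCenter) : F (prevOff F i) ∈ topCenterNbrs := by
  have hk : F (prevOff F i) ≠ topCenter :=
    Nat.findGreatest_spec (P := fun k => F k ≠ topCenter) (Nat.zero_le i) h0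
  have hki : prevOff F i < i :=
    lt_of_le_of_ne (Nat.findGreatest_le i) fun e => hk ((congrArg F e).trans h)
  have hk1 : F (prevOff F i + 1) = topCenter :=
    not_not.mp (Nat.findGreatest_is_greatest (Nat.lt_succ_self _) hki)
  apply mem_topCenterNbrs_of_adj6 (hX _)
  rw [← hk1]
  exact (hstep _).resolve_left fun e => hk (e.trans hk1)

theorem nextOff_mem_topCenterNbrs {m : ℕ} (hF : IsPaddedLoop MSS6 adj6 m F)
    (h0 : F 0 ≠ topCenter) {i : ℕ} (h : F i = topCenter) : F (nextOff F i) ∈ topCenterNbrs := by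
  obtain ⟨hik, hk⟩ : i ≤ nextOff F i ∧ F (nextOff F i) ≠ topCenter :=
    Nat.sInf_mem (s := {k | i ≤ k ∧ F k ≠ topCenter})
      ⟨max i m, le_max_left i m, hF.eq_of_le _ (le_max_right i m) ▸ h0⟩
  have hik' : i < nextOff F i := lt_of_le_of_ne hik fun e => hk (e ▸ h)
  have hk1 : F (nextOff F i - 1) = topCenter := by
    by_contra hne
    exact Nat.notMem_of_lt_sInf (s := {k | i ≤ k ∧ F k ≠ topCenter})
      (Nat.sub_one_lt_of_lt hik') ⟨Nat.le_sub_one_of_lt hik', hne⟩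
  have hstep := hF.adjEq_succ (nextOff F i - 1)
  rw [hk1, Nat.sub_add_cancel (by omega)] at hstep
  exact mem_topCenterNbrs_of_adj6 (hF.mem _) (symm (hstep.resolve_left fun e => hk e.symm))

theorem pushedOff_zero (h0 : F 0 ≠ topCenter) : pushedOff F 0 = F 0 := by
  simpa [pushedOff, interleave] using rerouted_eq_self h0

variable {m : ℕ}

theorem rerouted_spec (hF : IsPaddedLoop MSS6 adj6 m F) (h0 : F 0 ≠ topCenter) (i : ℕ) :
    rerouted F i ∈ puncturedMSS6 ∧ AdjEq adj6 (F i) (rerouted F i) := by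
  by_cases h : F i = topCenter
  · have hw := (reroute_spec _ (prevOff_mem_topCenterNbrs hF.mem hF.adjEq_succ h0 h) _
      (nextOff_mem_topCenterNbrs hF h0 h)).1
    rw [rerouted, if_pos h, h]
    exact ⟨mem_puncturedMSS6_of_mem_topCenterNbrs _ hw, Or.inr (adj6_topCenter_of_mem _ hw)⟩
  · rw [rerouted_eq_self h]
    exact ⟨⟨hF.mem i, h⟩, AdjEq.refl _ _⟩

theorem bridged_rerouted (hF : IsPaddedLoop MSS6 adj6 m F) (h0 : F 0 ≠ topCenter) (i : ℕ) :
    Bridged (rerouted F i) (rerouted F (i + 1)) := by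
  by_cases h : F i = topCenter <;> by_cases h' : F (i + 1) = topCenter
  · rw [rerouted_succ h h']
    exact bridged_of_adjEq (rerouted_spec hF h0 i).1 (AdjEq.refl _ _)
  · have hnext : nextOff F i = i + 1 := by rw [← nextOff_succ h, nextOff_eq_self h']
    have hv := nextOff_mem_topCenterNbrs hF h0 h
    rw [hnext] at hv
    rw [rerouted, if_pos h, hnext, rerouted_eq_self h']
    exact (reroute_spec _ (prevOff_mem_topCenterNbrs hF.mem hF.adjEq_succ h0 h) _ hv).2.2
  · have hprev : prevOff F (i + 1) = i := by rw [prevOff_succ h', prevOff_eq_self h]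
    have hu := prevOff_mem_topCenterNbrs hF.mem hF.adjEq_succ h0 h'
    rw [hprev] at hu
    rw [rerouted_eq_self h, rerouted, if_pos h', hprev]
    exact (reroute_spec _ hu _ (nextOff_mem_topCenterNbrs hF h0 h')).2.1
  · rw [rerouted_eq_self h, rerouted_eq_self h']
    exact bridged_of_adjEq ⟨hF.mem i, h⟩ (hF.adjEq_succ i)

theorem pathOn_pushedOff (hF : IsPaddedLoop MSS6 adj6 m F) (h0 : F 0 ≠ topCenter) (n : ℕ) :
    PathOn puncturedMSS6 adj6 n (pushedOff F) :=
  have hb := bridged_rerouted hF h0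
  ⟨fun s _ => interleave_of_forall (fun i => (rerouted_spec hF h0 i).1) (fun i => (hb i).2.2) s,
    fun s _ => interleave_rel_succ (fun i => (hb i).1) (fun i => (hb i).2.1) s⟩

theorem pushedOff_two_mul (hF : IsPaddedLoop MSS6 adj6 m F) (h0 : F 0 ≠ topCenter) :
    pushedOff F (2 * m) = F 0 := by
  rw [pushedOff, interleave_two_mul, rerouted_eq_self (hF.eq_of_le m le_rfl ▸ h0),
    hF.eq_of_le m le_rfl]

theorem loopPresHtpy_pushedOff (hF : IsPaddedLoop MSS6 adj6 m F) (h0 : F 0 ≠ topCenter) :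
    LoopPresHtpy MSS6 adj6 (2 * m) 1 (F ∘ stretchIdx F) (pushedOff F)
      (fun s t => if t = 0 then (F ∘ stretchIdx F) s else pushedOff F s) := by
  have hr := rerouted_spec hF h0
  have hb := bridged_rerouted hF h0
  refine loopPresHtpy_of_adjEq ⟨fun s _ => hF.mem _, fun s _ => ?_⟩
    ((pathOn_pushedOff hF h0 _).mono fun _ hp => hp.1) ?_ ?_ fun s _ => ?_
  · rcases stretchIdx_succ s with e | e <;> rw [Function.comp_apply, Function.comp_apply, e]
    exacts [AdjEq.refl _ _, hF.adjEq_succ _]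
  · rw [Function.comp_apply, Function.comp_apply, stretchIdx_zero, stretchIdx_two_mul,
      hF.eq_of_le m le_rfl]
  · rw [pushedOff_zero h0, pushedOff_two_mul hF h0]
  · refine interleave_rel (R := fun x y => AdjEq adj6 (F x) y) (fun i => (hr i).2) (fun i => ?_) s
    by_cases h : F i = topCenter
    · rw [if_pos h]
      by_cases h' : F (i + 1) = topCenter
      · rw [rerouted_succ h h', bridge_self, ← rerouted_succ h h']
        exact (hr (i + 1)).2
      · have := (hb i).2.1.symm
        rwa [rerouted_eq_self h'] at this ⊢
    · rw [if_neg h]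
      have := (hb i).1
      rwa [rerouted_eq_self h] at this ⊢

end PushOff

theorem pi1Trivial_of_ne_topCenter {x0 : ℤ³} (hq : x0 ≠ topCenter) : Pi1Trivial MSS6 adj6 x0 := by
  intro m f hf
  set F : ℕ → ℤ³ := fun i => f (min i m)
  have hF : IsPaddedLoop MSS6 adj6 m F := hf.isPaddedLoop
  have hF0 : F 0 = x0 := by simp [F, hf.2.1]
  have h0 : F 0 ≠ topCenter := by rwa [hF0]
  obtain ⟨p, -, M, H, hB⟩ := puncturedMSS6_contractible.noLoophole (2 * m) (pushedOff F)
    (pathOn_pushedOff hF h0 _) (by rw [pushedOff_zero h0, pushedOff_two_mul hF h0])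
  refine LoopEquiv.of_trivExt ?_ (((loopPresHtpy_pushedOff hF h0).trans
    (hB.mono fun _ hp => hp.1)).loopEquiv_const ?_)
  · refine ⟨fun s => min (stretchIdx F s) m, ?_, ?_, fun s _ => ?_, fun _ _ => rfl⟩
    · simp [stretchIdx_zero]
    · simp [stretchIdx_two_mul]
    · dsimp only
      rcases stretchIdx_succ (F := F) s with e | e <;> omega
  · rw [Function.comp_apply, stretchIdx_zero, hF0]

def flipZ (p : ℤ³) : ℤ³ := (p.1, p.2.1, 2 - p.2.2)

theorem flipZ_involutive : Function.Involutive flipZ := fun p => by simp [flipZ]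

theorem flipZ_mapsTo : Set.MapsTo flipZ MSS6 MSS6 := by
  rintro ⟨x, y, z⟩ hp
  simp only [MSS6, flipZ, Set.mem_ofPred_eq, ne_eq, Prod.mk.injEq] at hp ⊢
  omega

theorem adj6_flipZ (p q : ℤ³) (h : adj6 p q) : adj6 (flipZ p) (flipZ q) := by
  simpa only [adj6, flipZ, sub_sub_sub_cancel_left, abs_sub_comm] using h

/-- `Π₁⁶(MSS₆, x)` is trivial for every `x ∈ MSS₆`. -/
theorem stmt10 : ∀ x ∈ MSS6, Pi1Trivial MSS6 adj6 x := by
  intro x _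
  by_cases hx : x = topCenter
  · subst hx
    exact Pi1Trivial.of_leftInverse flipZ_mapsTo adj6_flipZ flipZ_mapsTo adj6_flipZ
      flipZ_involutive.leftInverse (pi1Trivial_of_ne_topCenter (by decide))
  · exact pi1Trivial_of_ne_topCenter hx
end

section
/- For any x ∈ MSS_6 = [0,2]_Z^3 \ {(1,1,1)} and any k ∈ {18, 26}, the fundamental group Π_1^k(MSS_6, x) is trivial. -/
/- ## General framework for digital topology -/

variable {α : Type*}

/- ## Auxiliary development for the proof of stmt11 -/

instance adj26.dec : ∀ p q : ℤ × ℤ × ℤ, Decidable (adj26 p q) := fun p q => by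
  unfold adj26; infer_instance

instance adj18.dec : ∀ p q : ℤ × ℤ × ℤ, Decidable (adj18 p q) := fun p q => by
  unfold adj18; infer_instance

lemma adj26_symm : ∀ a b : ℤ × ℤ × ℤ, adj26 a b → adj26 b a := by
  rintro a b ⟨h0, h1, h2, h3⟩
  exact ⟨h0.symm, by rwa [abs_sub_comm], by rwa [abs_sub_comm], by rwa [abs_sub_comm]⟩

lemma adj18_symm : ∀ a b : ℤ × ℤ × ℤ, adj18 a b → adj18 b a := by
  rintro a b ⟨h26, h⟩
  exact ⟨adj26_symm a b h26, by tauto⟩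

def MSS6L : List (ℤ × ℤ × ℤ) := [(0,0,0), (0,0,1), (0,0,2), (0,1,0), (0,1,1), (0,1,2), (0,2,0), (0,2,1), (0,2,2), (1,0,0), (1,0,1), (1,0,2), (1,1,0), (1,1,2), (1,2,0), (1,2,1), (1,2,2), (2,0,0), (2,0,1), (2,0,2), (2,1,0), (2,1,1), (2,1,2), (2,2,0), (2,2,1), (2,2,2)]

lemma mem_MSS6_iff (p : ℤ × ℤ × ℤ) : p ∈ MSS6 ↔ p ∈ MSS6L := by
  obtain ⟨a, b, c⟩ := p
  simp only [MSS6, Set.mem_setOf_eq]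
  constructor
  · rintro ⟨⟨ha0, ha2⟩, ⟨hb0, hb2⟩, ⟨hc0, hc2⟩, hne⟩
    interval_cases a <;> interval_cases b <;> interval_cases c <;> revert hne <;> decide
  · intro h
    revert h
    have : ∀ q ∈ MSS6L, (0 ≤ q.1 ∧ q.1 ≤ 2) ∧ (0 ≤ q.2.1 ∧ q.2.1 ≤ 2) ∧
        (0 ≤ q.2.2 ∧ q.2.2 ≤ 2) ∧ q ≠ (1,1,1) := by decide
    exact this (a, b, c)

def s18a : ℤ × ℤ × ℤ → ℤ × ℤ × ℤ := fun p =>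
  if p = (1,0,0) then (0,0,0) else
  if p = (1,0,1) then (1,0,1) else
  if p = (1,0,2) then (0,0,2) else
  if p = (1,1,0) then (1,1,0) else
  if p = (1,1,2) then (1,1,2) else
  if p = (1,2,0) then (1,1,0) else
  if p = (1,2,1) then (1,2,1) else
  if p = (1,2,2) then (0,2,2) else
  if p = (2,0,0) then (1,1,0) else
  if p = (2,0,1) then (1,0,1) else
  if p = (2,0,2) then (1,0,1) else
  if p = (2,1,0) then (1,1,0) else
  if p = (2,1,1) then (2,1,1) else
  if p = (2,1,2) then (1,1,2) else
  if p = (2,2,0) then (1,2,1) else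
  if p = (2,2,1) then (1,2,1) else
  if p = (2,2,2) then (1,1,2) else
  (0,1,1)

def s18b : ℤ × ℤ × ℤ → ℤ × ℤ × ℤ := fun p =>
  if p = (2,1,1) then (1,2,1) else
  (0,1,1)

def s26a : ℤ × ℤ × ℤ → ℤ × ℤ × ℤ := fun p =>
  if p = (0,0,0) then (0,0,0) else
  if p = (0,0,1) then (0,0,1) else
  if p = (0,0,2) then (0,0,2) else
  if p = (0,1,0) then (0,1,0) else
  if p = (0,1,2) then (0,1,2) else
  if p = (0,2,0) then (0,2,0) else
  if p = (0,2,1) then (0,2,1) else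
  if p = (0,2,2) then (0,2,2) else
  if p = (1,0,0) then (1,0,0) else
  if p = (1,0,1) then (1,0,1) else
  if p = (1,0,2) then (1,0,2) else
  if p = (1,1,0) then (1,1,0) else
  if p = (1,1,2) then (1,1,2) else
  if p = (1,2,0) then (1,2,0) else
  if p = (1,2,1) then (1,2,1) else
  if p = (1,2,2) then (1,2,2) else
  if p = (2,0,0) then (1,0,0) else
  if p = (2,0,1) then (1,0,1) else
  if p = (2,0,2) then (1,0,2) else
  if p = (2,1,0) then (1,1,0) else
  if p = (2,1,1) then (2,1,1) else
  if p = (2,1,2) then (1,1,2) else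
  if p = (2,2,0) then (1,2,0) else
  if p = (2,2,1) then (1,2,1) else
  if p = (2,2,2) then (1,2,2) else
  (0,1,1)

def s26b : ℤ × ℤ × ℤ → ℤ × ℤ × ℤ := fun p =>
  if p = (2,1,1) then (1,1,0) else
  (0,1,1)

def C18 : ℤ × ℤ × ℤ → ℕ → ℤ × ℤ × ℤ
  | p, 0 => p
  | p, 1 => s18a p
  | p, 2 => s18b p
  | _, _+3 => (0,1,1)

def C26 : ℤ × ℤ × ℤ → ℕ → ℤ × ℤ × ℤ
  | p, 0 => p
  | p, 1 => s26a p
  | p, 2 => s26b p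
  | _, _+3 => (0,1,1)

section Checks

lemma c18_mem : ∀ x ∈ MSS6, ∀ t, C18 x t ∈ MSS6 := by
  intro x hx t
  rw [mem_MSS6_iff] at hx ⊢
  match t with
  | 0 => exact hx
  | 1 => exact (by decide : ∀ p ∈ MSS6L, s18a p ∈ MSS6L) x hx
  | 2 => exact (by decide : ∀ p ∈ MSS6L, s18b p ∈ MSS6L) x hx
  | (n+3) =>
      show ((0:ℤ),(1:ℤ),(1:ℤ)) ∈ MSS6L
      decide

lemma c26_mem : ∀ x ∈ MSS6, ∀ t, C26 x t ∈ MSS6 := by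
  intro x hx t
  rw [mem_MSS6_iff] at hx ⊢
  match t with
  | 0 => exact hx
  | 1 => exact (by decide : ∀ p ∈ MSS6L, s26a p ∈ MSS6L) x hx
  | 2 => exact (by decide : ∀ p ∈ MSS6L, s26b p ∈ MSS6L) x hx
  | (n+3) =>
      show ((0:ℤ),(1:ℤ),(1:ℤ)) ∈ MSS6L
      decide

lemma c18_final : ∀ x ∈ MSS6, ∀ t, 3 ≤ t → C18 x t = (0,1,1) := by
  intro x _ t ht
  obtain ⟨n, rfl⟩ : ∃ n, t = n + 3 := ⟨t - 3, by omega⟩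
  rfl

lemma c26_final : ∀ x ∈ MSS6, ∀ t, 3 ≤ t → C26 x t = (0,1,1) := by
  intro x _ t ht
  obtain ⟨n, rfl⟩ : ∃ n, t = n + 3 := ⟨t - 3, by omega⟩
  rfl

lemma c18_cont : ∀ x ∈ MSS6, ∀ y ∈ MSS6, adj18 x y → ∀ t,
    C18 x t = C18 y t ∨ adj18 (C18 x t) (C18 y t) := by
  intro x hx y hy hxy t
  rw [mem_MSS6_iff] at hx hy
  match t with
  | 0 => exact Or.inr hxy
  | 1 => exact (by decide : ∀ p ∈ MSS6L, ∀ q ∈ MSS6L, adj18 p q →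
      (s18a p = s18a q ∨ adj18 (s18a p) (s18a q))) x hx y hy hxy
  | 2 => exact (by decide : ∀ p ∈ MSS6L, ∀ q ∈ MSS6L, adj18 p q →
      (s18b p = s18b q ∨ adj18 (s18b p) (s18b q))) x hx y hy hxy
  | (n+3) => exact Or.inl rfl

lemma c26_cont : ∀ x ∈ MSS6, ∀ y ∈ MSS6, adj26 x y → ∀ t,
    C26 x t = C26 y t ∨ adj26 (C26 x t) (C26 y t) := by
  intro x hx y hy hxy t
  rw [mem_MSS6_iff] at hx hy
  match t with
  | 0 => exact Or.inr hxy
  | 1 => exact (by decide : ∀ p ∈ MSS6L, ∀ q ∈ MSS6L, adj26 p q →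
      (s26a p = s26a q ∨ adj26 (s26a p) (s26a q))) x hx y hy hxy
  | 2 => exact (by decide : ∀ p ∈ MSS6L, ∀ q ∈ MSS6L, adj26 p q →
      (s26b p = s26b q ∨ adj26 (s26b p) (s26b q))) x hx y hy hxy
  | (n+3) => exact Or.inl rfl

lemma c18_step : ∀ x ∈ MSS6, ∀ t,
    C18 x t = C18 x (t+1) ∨ adj18 (C18 x t) (C18 x (t+1)) := by
  intro x hx t
  rw [mem_MSS6_iff] at hx
  match t with
  | 0 => exact (by decide : ∀ p ∈ MSS6L, p = s18a p ∨ adj18 p (s18a p)) x hx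
  | 1 => exact (by decide : ∀ p ∈ MSS6L, s18a p = s18b p ∨ adj18 (s18a p) (s18b p)) x hx
  | 2 => exact (by decide : ∀ p ∈ MSS6L, s18b p = (0,1,1) ∨ adj18 (s18b p) (0,1,1)) x hx
  | (n+3) => exact Or.inl rfl

lemma c26_step : ∀ x ∈ MSS6, ∀ t,
    C26 x t = C26 x (t+1) ∨ adj26 (C26 x t) (C26 x (t+1)) := by
  intro x hx t
  rw [mem_MSS6_iff] at hx
  match t with
  | 0 => exact (by decide : ∀ p ∈ MSS6L, p = s26a p ∨ adj26 p (s26a p)) x hx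
  | 1 => exact (by decide : ∀ p ∈ MSS6L, s26a p = s26b p ∨ adj26 (s26a p) (s26b p)) x hx
  | 2 => exact (by decide : ∀ p ∈ MSS6L, s26b p = (0,1,1) ∨ adj26 (s26b p) (0,1,1)) x hx
  | (n+3) => exact Or.inl rfl

end Checks

theorem pi1_of_contraction (X : Set α) (κ : α → α → Prop)
    (hsymm : ∀ a b, κ a b → κ b a)
    (N : ℕ) (hN : 1 ≤ N) (C : α → ℕ → α) (pc : α)
    (h1 : ∀ x ∈ X, ∀ t, C x t ∈ X)
    (h2 : ∀ x ∈ X, C x 0 = x)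
    (h3 : ∀ x ∈ X, ∀ t, N ≤ t → C x t = pc)
    (h4 : ∀ x ∈ X, ∀ y ∈ X, κ x y → ∀ t, C x t = C y t ∨ κ (C x t) (C y t))
    (h5 : ∀ x ∈ X, ∀ t, C x t = C x (t+1) ∨ κ (C x t) (C x (t+1)))
    (x0 : α) (hx0 : x0 ∈ X) : Pi1Trivial X κ x0 := by
  intro m f hf
  obtain ⟨⟨hfX, hfadj⟩, hf0, hfm⟩ := hf
  have hA : ∀ x ∈ X, ∀ a b : ℕ, (a = b ∨ a + 1 = b ∨ b + 1 = a) →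
      C x a = C x b ∨ κ (C x a) (C x b) := by
    intro x hx a b hab
    rcases hab with rfl | rfl | rfl
    · exact Or.inl rfl
    · exact h5 x hx a
    · rcases h5 x hx b with h | h
      · exact Or.inl h.symm
      · exact Or.inr (hsymm _ _ h)
  set m' := N + m + N with hm'
  set φ : ℕ → ℕ := fun s => min (s - N) m with hφ
  set r : ℕ → ℕ := fun s => min s (m' - s) with hr
  have hφle : ∀ s, φ s ≤ m := fun s => min_le_right _ _
  have hφstep : ∀ s, φ (s+1) = φ s ∨ φ (s+1) = φ s + 1 := by
    intro s; simp only [hφ]; omega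
  have hfφX : ∀ s, f (φ s) ∈ X := fun s => hfX _ (hφle s)
  refine ⟨m', fun s => f (φ s), fun _ => x0, ⟨φ, by simp [hφ], by simp only [hφ, hm']; omega,
      fun i _ => hφstep i, fun i _ => rfl⟩,
    ⟨fun _ => 0, rfl, rfl, fun i _ => Or.inl rfl, fun i _ => rfl⟩, 2*N, ?_⟩
  set H : ℕ → ℕ → α := fun s t =>
    if t ≤ N then C (f (φ s)) (min t (r s)) else C x0 (min (r s) (2*N - t)) with hH
  have hend : ∀ s, s = 0 ∨ s = m' → ∀ t, H s t = x0 := by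
    rintro s hs t
    have hrs : r s = 0 := by rcases hs with rfl | rfl <;> simp only [hr] <;> omega
    have hfs : f (φ s) = x0 := by
      rcases hs with rfl | rfl
      · rw [show φ 0 = 0 by simp [hφ], hf0]
      · rw [show φ m' = m by simp only [hφ, hm']; omega, hfm]
    by_cases ht : t ≤ N <;>
      simp only [hH, ht, if_true, if_false, hrs, Nat.min_zero, Nat.zero_min, hfs] <;>
      exact h2 _ hx0
  refine ⟨H, ?_, ?_, ?_, ?_, fun t _ => ⟨hend 0 (Or.inl rfl) t, hend m' (Or.inr rfl) t⟩⟩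
  · intro s _ t _
    by_cases ht : t ≤ N <;> simp only [hH, ht, if_true, if_false]
    · exact h1 _ (hfφX s) _
    · exact h1 _ hx0 _
  · intro s _
    constructor
    · have : (0:ℕ) ≤ N := Nat.zero_le _
      simp only [hH, this, if_true, Nat.zero_min]
      exact h2 _ (hfφX s)
    · have hgt : ¬ (2*N ≤ N) := by omega
      simp only [hH, hgt, if_false, Nat.sub_self, Nat.min_zero]
      exact h2 _ hx0
  · -- rows
    intro t _ s hs
    by_cases ht : t ≤ N
    · rcases hφstep s with heq | hsucc
      · simp only [hH, ht, if_true, heq]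
        exact hA _ (hfφX s) _ _ (by simp only [hr]; omega)
      · have hb : N ≤ s ∧ s - N < m := by
          constructor
          · by_contra hc
            have : φ (s+1) = 0 ∧ φ s = 0 := by simp only [hφ]; omega
            omega
          · by_contra hc
            have : φ (s+1) = m ∧ φ s = m := by simp only [hφ]; omega
            omega
        have hr1 : min t (r s) = t := by simp only [hr]; omega
        have hr2 : min t (r (s+1)) = t := by simp only [hr]; omega
        simp only [hH, ht, if_true, hr1, hr2, hsucc]
        have hφlt : φ s < m := by simp only [hφ]; omega
        rcases hfadj (φ s) hφlt with he | hk
        · rw [he]; exact Or.inl rfl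
        · exact h4 _ (hfX _ (by omega)) _ (hfX _ (by omega)) hk t
    · simp only [hH, ht, if_false]
      exact hA _ hx0 _ _ (by simp only [hr]; omega)
  · -- cols
    intro s hs t ht
    by_cases ht1 : t + 1 ≤ N
    · have ht0 : t ≤ N := by omega
      simp only [hH, ht0, ht1, if_true]
      exact hA _ (hfφX s) _ _ (by omega)
    · by_cases ht0 : t ≤ N
      · have htN : t = N := by omega
        have hne : ¬ (t + 1 ≤ N) := ht1
        simp only [hH, ht0, if_true, hne, if_false]
        by_cases hrs : N ≤ r s
        · have e1 : min t (r s) = N := by omega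
          have e2 : min (r s) (2*N - (t+1)) = N - 1 := by omega
          rw [e1, e2, h3 _ (hfφX s) N le_rfl, ← h3 x0 hx0 N le_rfl]
          exact hA _ hx0 _ _ (by omega)
        · have hfs : f (φ s) = x0 := by
            have : s < N ∨ m' - s < N := by simp only [hr] at hrs; omega
            rcases this with hlt | hlt
            · rw [show φ s = 0 by simp only [hφ]; omega, hf0]
            · rw [show φ s = m by simp only [hφ, hm'] at *; omega, hfm]
          have e1 : min t (r s) = r s := by omega
          have e2 : min (r s) (2*N - (t+1)) = r s := by omega
          rw [e1, e2, hfs]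
          exact Or.inl rfl
      · have hne2 : ¬ (t + 1 ≤ N) := ht1
        simp only [hH, ht0, hne2, if_false]
        exact hA _ hx0 _ _ (by omega)


/-- `Π₁ᵏ(MSS₆, x)` is trivial for `k ∈ {18,26}` and every `x ∈ MSS₆`. -/
theorem stmt11 : ∀ x ∈ MSS6, Pi1Trivial MSS6 adj18 x ∧ Pi1Trivial MSS6 adj26 x := by
  intro x hx
  constructor
  · exact pi1_of_contraction MSS6 adj18 adj18_symm 3 (by omega) C18 (0,1,1)
      c18_mem (fun x _ => rfl) c18_final c18_cont c18_step x hx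
  · exact pi1_of_contraction MSS6 adj26 adj26_symm 3 (by omega) C26 (0,1,1)
      c26_mem (fun x _ => rfl) c26_final c26_cont c26_step x hx
end
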